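/- arXiv:0912.1559 — 9 statements merged into one kernel-verified Lean document; each statement's English description precedes it below -/
import Mathlib

section
/- Let G = G1 × G2 be a finite group and A a Schur ring over G such that both G1 and G2 are A-subgroups. Then for every basic set X of A, the projection π_i(X) of X onto G_i is again a basic set of A, for i = 1, 2. -/
open Pointwise

/-- A Schur ring over a finite group `G`, given combinatorially by its partition
into basic sets with constant structure constants. -/
structure SchurRing (G : Type*) [Group G] where
  parts : Set (Set G)
  nonempty : ∀ X ∈ parts, X.Nonempty
  cover : ∀ g : G, ∃ X ∈ parts, g ∈ X
  disjoint : ∀ X ∈ parts, ∀ Y ∈ parts, X ≠ Y → X ∩ Y = ∅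
  one_mem : {1} ∈ parts
  inv_closed : ∀ X ∈ parts, X⁻¹ ∈ parts
  struct_const : ∀ X ∈ parts, ∀ Y ∈ parts, ∀ Z ∈ parts, ∀ z₁ ∈ Z, ∀ z₂ ∈ Z,
    Set.ncard {xy : G × G | xy.1 ∈ X ∧ xy.2 ∈ Y ∧ xy.1 * xy.2 = z₁} =
    Set.ncard {xy : G × G | xy.1 ∈ X ∧ xy.2 ∈ Y ∧ xy.1 * xy.2 = z₂}

/-- A subset of `G` is an `A`-set if it is a union of basic sets of `A`. -/
def SchurRing.IsASet {G : Type*} [Group G] (A : SchurRing G) (S : Set G) : Prop :=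
  ∀ g ∈ S, ∃ X ∈ A.parts, g ∈ X ∧ X ⊆ S

namespace SchurRing

variable {G : Type*} [Group G] [Finite G] (A : SchurRing G)

lemma part_eq {X Y : Set G} (hX : X ∈ A.parts) (hY : Y ∈ A.parts)
    {g : G} (hgX : g ∈ X) (hgY : g ∈ Y) : X = Y := by
  by_contra h
  have hd := A.disjoint X hX Y hY h
  have : g ∈ X ∩ Y := ⟨hgX, hgY⟩
  rw [hd] at this
  exact this

lemma basic_subset {X S : Set G} (hX : X ∈ A.parts) (hS : A.IsASet S)
    {g : G} (hgX : g ∈ X) (hgS : g ∈ S) : X ⊆ S := by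
  obtain ⟨Y, hY, hgY, hYS⟩ := hS g hgS
  rw [A.part_eq hX hY hgX hgY]
  exact hYS

lemma isASet_inter {S T : Set G} (hS : A.IsASet S) (hT : A.IsASet T) :
    A.IsASet (S ∩ T) := by
  rintro g ⟨hgS, hgT⟩
  obtain ⟨X, hX, hgX, hXS⟩ := hS g hgS
  exact ⟨X, hX, hgX, Set.subset_inter hXS (A.basic_subset hX hT hgX hgT)⟩

lemma isASet_mul_basic {X Y : Set G} (hX : X ∈ A.parts) (hY : Y ∈ A.parts) :
    A.IsASet (X * Y) := by
  intro g hg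
  obtain ⟨Z, hZ, hgZ⟩ := A.cover g
  refine ⟨Z, hZ, hgZ, fun z hz => ?_⟩
  have h := A.struct_const X hX Y hY Z hZ g hgZ z hz
  obtain ⟨x, hx, y, hy, hxy⟩ := hg
  have hpos : 0 < Set.ncard {xy : G × G | xy.1 ∈ X ∧ xy.2 ∈ Y ∧ xy.1 * xy.2 = g} := by
    rw [Set.ncard_pos (Set.toFinite _)]
    exact ⟨(x, y), hx, hy, hxy⟩
  rw [h] at hpos
  obtain ⟨⟨a, b⟩, ha, hb, hab⟩ := (Set.ncard_pos (Set.toFinite _)).mp hpos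
  exact hab ▸ Set.mul_mem_mul ha hb

lemma isASet_basic_mul_aset {X S : Set G} (hX : X ∈ A.parts) (hS : A.IsASet S) :
    A.IsASet (X * S) := by
  intro g hg
  obtain ⟨x, hx, s, hs, rfl⟩ := hg
  obtain ⟨Y, hY, hsY, hYS⟩ := hS s hs
  obtain ⟨Z, hZ, hgZ, hZXY⟩ := A.isASet_mul_basic hX hY (x * s) (Set.mul_mem_mul hx hsY)
  exact ⟨Z, hZ, hgZ, hZXY.trans (Set.mul_subset_mul_left hYS)⟩

/-- Abstract projection lemma: if `π` is a "projection onto `H` along `K`"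
for `A`-sets `H`, `K`, then the image of a basic set under `π` is basic. -/
lemma proj_basic_aux {H K : Set G} (hH : A.IsASet H) (hK : A.IsASet K)
    (π : G → G)
    (hπH : ∀ g, π g ∈ H)
    (hπK : ∀ g, g⁻¹ * π g ∈ K)
    (hK1 : ∀ g, (π g)⁻¹ * g ∈ K)
    (hfix : ∀ g ∈ H, π g = g)
    (hmulK : ∀ g, ∀ k ∈ K, π (g * k) = π g)
    {X : Set G} (hX : X ∈ A.parts) : π '' X ∈ A.parts := by
  have himg : π '' X = (X * K) ∩ H := by
    ext g
    constructor
    · rintro ⟨x, hx, rfl⟩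
      refine ⟨?_, hπH x⟩
      have hx' : π x = x * (x⁻¹ * π x) := by group
      rw [hx']
      exact Set.mul_mem_mul hx (hπK x)
    · rintro ⟨hg1, hg2⟩
      obtain ⟨x, hx, k, hk, rfl⟩ := hg1
      exact ⟨x, hx, by rw [← hmulK x k hk]; exact hfix _ hg2⟩
  have hP : A.IsASet (π '' X) := by
    rw [himg]
    exact A.isASet_inter (A.isASet_basic_mul_aset hX hK) hH
  obtain ⟨x0, hx0⟩ := A.nonempty X hX
  obtain ⟨Y, hY, hY0, hYP⟩ := hP (π x0) ⟨x0, hx0, rfl⟩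
  have hx0YK : x0 ∈ Y * K := by
    have hx' : x0 = π x0 * ((π x0)⁻¹ * x0) := by group
    rw [hx']
    exact Set.mul_mem_mul hY0 (hK1 x0)
  have hXYK : X ⊆ Y * K :=
    A.basic_subset hX (A.isASet_basic_mul_aset hY hK) hx0 hx0YK
  have hPY : π '' X ⊆ Y := by
    rintro _ ⟨x, hx, rfl⟩
    obtain ⟨y, hy, k, hk, hyk⟩ := hXYK hx
    have hyH : y ∈ H := by
      obtain ⟨x', hx', hpx'⟩ := hYP hy
      rw [← hpx']
      exact hπH x'
    have : π x = y := by rw [← hyk, hmulK y k hk, hfix y hyH]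
    rw [this]
    exact hy
  have : π '' X = Y := le_antisymm hPY hYP
  rw [this]
  exact hY

end SchurRing

/-- If `G = G₁ × G₂` and both factors are `A`-subgroups, then the projection of any
basic set of `A` onto each factor (viewed inside `G`) is again a basic set. -/
theorem schurRing_proj_basic {G₁ G₂ : Type*} [Group G₁] [Group G₂] [Finite G₁] [Finite G₂]
    (A : SchurRing (G₁ × G₂))
    (h₁ : A.IsASet {g : G₁ × G₂ | g.2 = 1})
    (h₂ : A.IsASet {g : G₁ × G₂ | g.1 = 1}) :
    ∀ X ∈ A.parts,
      ((fun g : G₁ × G₂ => (g.1, (1 : G₂))) '' X ∈ A.parts ∧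
       (fun g : G₁ × G₂ => ((1 : G₁), g.2)) '' X ∈ A.parts) := by
  intro X hX
  constructor
  · exact A.proj_basic_aux h₁ h₂ (fun g => (g.1, 1))
      (fun g => rfl)
      (fun g => by simp [Prod.ext_iff])
      (fun g => by simp [Prod.ext_iff])
      (fun g hg => by ext <;> simp_all [Prod.ext_iff])
      (fun g k hk => by
        simp only [Set.mem_setOf_eq] at hk
        ext <;> simp [Prod.ext_iff, hk]) hX
  · exact A.proj_basic_aux h₂ h₁ (fun g => (1, g.2))
      (fun g => rfl)
      (fun g => by simp [Prod.ext_iff])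
      (fun g => by simp [Prod.ext_iff])
      (fun g hg => by ext <;> simp_all [Prod.ext_iff])
      (fun g k hk => by
        simp only [Set.mem_setOf_eq] at hk
        ext <;> simp [Prod.ext_iff, hk]) hX
end

section
/- Let A be a Schur ring over a finite abelian group G and X a basic set of A. Then for any integer m coprime to |G|, the set X^{(m)} = {x^m : x ∈ X} is again a basic set of A. -/
open Pointwise

/-!
For a prime `p ∤ |G|` the Frobenius map of `𝔽_p[G]` gives `ξ(X)^p = ξ(X^{(p)})`. The left side
lies in the S-ring, because multiplying by `ξ(X)` preserves constancy of coefficients on basic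
sets (the structure constants are constant), so `X^{(p)}` is a union of basic sets. Composing
primes, every `x ↦ x^k` with `k` coprime to `|G|` maps unions of basic sets to unions of basic
sets. This map is a permutation of `G` whose inverse is one of its powers, and a bijection that
preserves unions of basic sets in both directions must map each basic set onto a basic set.
-/

open Equiv Finset MonoidAlgebra

lemma exists_coprime_forall_zpow_eq_pow {G : Type*} [Group G] [Finite G] {m : ℤ}
    (hm : m.gcd (Nat.card G) = 1) : ∃ k : ℕ, (Nat.card G).Coprime k ∧ ∀ x : G, x ^ m = x ^ k := by
  have hk : ((m % Nat.card G).toNat : ℤ) = m % Nat.card G :=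
    Int.toNat_of_nonneg (Int.emod_nonneg m (by simp [Nat.card_pos.ne']))
  refine ⟨(m % Nat.card G).toNat, ?_, fun x => ?_⟩
  · rw [Nat.coprime_comm, Nat.Coprime, ← Int.gcd_natCast_natCast, hk, Int.gcd_emod, hm]
  · rw [← zpow_natCast, hk, zpow_mod_natCard]

namespace SchurRing

variable {G : Type*}

section Group

variable [Group G] (A : SchurRing G)

noncomputable def basicSet (g : G) : Set G := (A.cover g).choose

lemma basicSet_mem_parts (g : G) : A.basicSet g ∈ A.parts := (A.cover g).choose_spec.1

lemma mem_basicSet (g : G) : g ∈ A.basicSet g := (A.cover g).choose_spec.2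

lemma basicSet_eq_iff {X : Set G} (hX : X ∈ A.parts) {g : G} : A.basicSet g = X ↔ g ∈ X := by
  refine ⟨fun h => h ▸ A.mem_basicSet g, fun hg => ?_⟩
  by_contra hne
  have hempty := A.disjoint _ (A.basicSet_mem_parts g) X hX hne
  exact hempty.subset ⟨A.mem_basicSet g, hg⟩

def PreservesASets (f : G → G) : Prop := ∀ S, A.IsASet S → A.IsASet (f '' S)

variable {A}

lemma PreservesASets.comp {f g : G → G} (hf : A.PreservesASets f) (hg : A.PreservesASets g) :
    A.PreservesASets (f ∘ g) := fun S hS => by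
  rw [Set.image_comp]
  exact hf _ (hg S hS)

lemma PreservesASets.iterate {f : G → G} (hf : A.PreservesASets f) (n : ℕ) :
    A.PreservesASets f^[n] := by
  induction n with
  | zero => exact fun S hS => by simpa using hS
  | succ n ih => rw [Function.iterate_succ]; exact ih.comp hf

lemma preservesASets_of_forall_parts {f : G → G} (h : ∀ X ∈ A.parts, A.IsASet (f '' X)) :
    A.PreservesASets f := by
  rintro S hS _ ⟨s, hs, rfl⟩
  obtain ⟨Y, hY, hsY, hYS⟩ := hS s hs
  obtain ⟨Z, hZ, hZ', hZY⟩ := h Y hY (f s) ⟨s, hsY, rfl⟩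
  exact ⟨Z, hZ, hZ', hZY.trans (Set.image_mono hYS)⟩

/-- In the finite group `Perm G`, `σ⁻¹` is a positive power of `σ`. -/
lemma PreservesASets.perm_inv [Finite G] {σ : Perm G} (hσ : A.PreservesASets σ) :
    A.PreservesASets ⇑σ⁻¹ := by
  obtain ⟨n, hn⟩ := mem_powers_iff_mem_zpowers.2 (Subgroup.inv_mem _ (Subgroup.mem_zpowers σ))
  rw [← hn, Perm.coe_pow]
  exact hσ.iterate n

lemma PreservesASets.image_mem_parts [Finite G] {σ : Perm G} (hσ : A.PreservesASets σ)
    {X : Set G} (hX : X ∈ A.parts) : σ '' X ∈ A.parts := by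
  obtain ⟨x, hx⟩ := A.nonempty X hX
  obtain ⟨Y, hY, hxY, hYX⟩ := hσ X (fun g hg => ⟨X, hX, hg, subset_rfl⟩) (σ x) ⟨x, hx, rfl⟩
  obtain ⟨Z, hZ, hxZ, hZY⟩ := hσ.perm_inv Y (fun g hg => ⟨Y, hY, hg, subset_rfl⟩) x
    ⟨σ x, hxY, by simp⟩
  have hZX : Z = X := by
    rw [← A.basicSet_eq_iff hZ |>.2 hxZ, A.basicSet_eq_iff hX |>.2 hx]
  have hXY : X ⊆ ⇑σ⁻¹ '' Y := hZX ▸ hZY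
  have hσXY : σ '' X ⊆ Y := by
    rintro _ ⟨x, hx, rfl⟩
    obtain ⟨y, hy, rfl⟩ := hXY hx
    simpa using hy
  rwa [hσXY.antisymm hYX]

end Group

section GroupRing

open scoped Classical

variable [Fintype G] {R : Type*} [CommRing R]

variable (R) in
/-- The simple quantity `ξ(X) = ∑_{x ∈ X} x` of the group ring `R[G]`. -/
noncomputable def simpleQuantity (X : Set G) : MonoidAlgebra R G := ∑ x ∈ X.toFinset, single x 1

lemma coeff_simpleQuantity (X : Set G) (g : G) :
    (simpleQuantity R X).coeff g = if g ∈ X then 1 else 0 := by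
  simp [simpleQuantity, coeff_sum, Finsupp.single_apply]

variable [CommGroup G]

lemma simpleQuantity_singleton_one : simpleQuantity R ({1} : Set G) = 1 := by
  simp only [simpleQuantity, Set.toFinset_singleton, Finset.sum_singleton, MonoidAlgebra.one_def]

lemma simpleQuantity_pow_char (p : ℕ) [Fact p.Prime] [CharP R p] (X : Set G)
    (hinj : Function.Injective fun x : G => x ^ p) :
    simpleQuantity R X ^ p = simpleQuantity R ((fun x => x ^ p) '' X) := by
  have : CharP (MonoidAlgebra R G) p := charP_of_injective_algebraMap' R p
  rw [simpleQuantity, sum_pow_char, simpleQuantity, Set.toFinset_image, Finset.sum_image hinj.injOn]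
  simp [single_pow]

variable (A : SchurRing G)

/-- `a` lies in the S-ring `A` taken with coefficients in `R`. -/
def ConstOnBasicSets (a : MonoidAlgebra R G) : Prop := Function.FactorsThrough a.coeff A.basicSet

lemma constOnBasicSets_simpleQuantity {X : Set G} (hX : X ∈ A.parts) :
    A.ConstOnBasicSets (simpleQuantity R X) := by
  intro g h hgh
  simp only [coeff_simpleQuantity, ← A.basicSet_eq_iff hX, hgh]

lemma isASet_of_constOnBasicSets [Nontrivial R] {S : Set G}
    (hS : A.ConstOnBasicSets (simpleQuantity R S)) : A.IsASet S := by
  intro g hg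
  refine ⟨A.basicSet g, A.basicSet_mem_parts g, A.mem_basicSet g, fun h hh => ?_⟩
  have hgh := hS ((A.basicSet_eq_iff (A.basicSet_mem_parts g)).2 hh)
  simp_all [coeff_simpleQuantity]

lemma coeff_mul_simpleQuantity (a : MonoidAlgebra R G) (X : Set G) (z : G) :
    (a * simpleQuantity R X).coeff z = ∑ x ∈ X.toFinset, a.coeff (z * x⁻¹) := by
  simp [simpleQuantity, Finset.mul_sum, coeff_sum]

lemma ncard_structConst_eq_card (W X : Set G) (z : G) :
    {xy : G × G | xy.1 ∈ W ∧ xy.2 ∈ X ∧ xy.1 * xy.2 = z}.ncard =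
      #{x ∈ X.toFinset | z * x⁻¹ ∈ W} := by
  rw [← Set.ncard_coe_finset]
  refine Set.ncard_congr (fun xy _ => xy.2) ?_ ?_ ?_
  · rintro ⟨w, x⟩ ⟨hw, hx, rfl⟩
    simpa using ⟨hx, hw⟩
  · rintro ⟨w, x⟩ ⟨w', x'⟩ ⟨-, -, hz⟩ ⟨-, -, hz'⟩ (rfl : x = x')
    exact Prod.ext (mul_right_cancel (hz.trans hz'.symm)) rfl
  · intro x hx
    rw [Finset.mem_coe, Finset.mem_filter, Set.mem_toFinset] at hx
    exact ⟨(z * x⁻¹, x), ⟨hx.2, hx.1, inv_mul_cancel_right z x⟩, rfl⟩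

lemma sum_mul_inv_eq_sum_parts {f : G → R} (hf : Function.FactorsThrough f A.basicSet)
    (s : Finset G) (z : G) : ∑ x ∈ s, f (z * x⁻¹) =
      ∑ W ∈ A.parts.toFinset, #{x ∈ s | z * x⁻¹ ∈ W} • Function.extend A.basicSet f 0 W := by
  set κ := Function.extend A.basicSet f 0
  calc ∑ x ∈ s, f (z * x⁻¹) = ∑ x ∈ s, κ (A.basicSet (z * x⁻¹)) := by
        simp only [κ, hf.extend_apply]
    _ = ∑ W ∈ A.parts.toFinset, ∑ x ∈ s with A.basicSet (z * x⁻¹) = W,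
          κ (A.basicSet (z * x⁻¹)) :=
        (Finset.sum_fiberwise_of_maps_to (fun x _ => by simpa using A.basicSet_mem_parts _) _).symm
    _ = _ := by
      refine Finset.sum_congr rfl fun W hW => ?_
      rw [Finset.sum_congr rfl fun x hx => by rw [(Finset.mem_filter.1 hx).2], Finset.sum_const]
      simp_rw [A.basicSet_eq_iff (Set.mem_toFinset.1 hW)]

lemma constOnBasicSets_mul_simpleQuantity {a : MonoidAlgebra R G} (ha : A.ConstOnBasicSets a)
    {X : Set G} (hX : X ∈ A.parts) : A.ConstOnBasicSets (a * simpleQuantity R X) := by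
  intro z₁ z₂ hz
  simp only [coeff_mul_simpleQuantity, A.sum_mul_inv_eq_sum_parts ha]
  refine Finset.sum_congr rfl fun W hW => ?_
  rw [← ncard_structConst_eq_card, ← ncard_structConst_eq_card,
    A.struct_const W (Set.mem_toFinset.1 hW) X hX _ (A.basicSet_mem_parts z₁) z₁
      (A.mem_basicSet z₁) z₂ (hz ▸ A.mem_basicSet z₂)]

lemma constOnBasicSets_simpleQuantity_pow {X : Set G} (hX : X ∈ A.parts) (n : ℕ) :
    A.ConstOnBasicSets (simpleQuantity R X ^ n) := by
  induction n with
  | zero =>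
    rw [pow_zero, ← simpleQuantity_singleton_one]
    exact A.constOnBasicSets_simpleQuantity A.one_mem
  | succ n ih =>
    rw [pow_succ]
    exact A.constOnBasicSets_mul_simpleQuantity ih hX

end GroupRing

variable [CommGroup G] [Fintype G] (A : SchurRing G)

lemma isASet_image_pow_prime {X : Set G} (hX : X ∈ A.parts) {p : ℕ} (hp : p.Prime)
    (hinj : Function.Injective fun x : G => x ^ p) : A.IsASet ((fun x => x ^ p) '' X) := by
  have := Fact.mk hp
  apply A.isASet_of_constOnBasicSets (R := ZMod p)
  rw [← simpleQuantity_pow_char p X hinj]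
  exact A.constOnBasicSets_simpleQuantity_pow hX p

lemma preservesASets_pow {k : ℕ} (hk : (Nat.card G).Coprime k) :
    A.PreservesASets fun x => x ^ k := by
  induction k using Nat.recOnMul with
  | zero =>
    rintro S - _ ⟨s, hs, rfl⟩
    refine ⟨{1}, A.one_mem, pow_zero s, ?_⟩
    rintro _ rfl
    exact ⟨s, hs, pow_zero s⟩
  | one => simp [PreservesASets]
  | prime p hp =>
    exact preservesASets_of_forall_parts fun X hX =>
      A.isASet_image_pow_prime hX hp (powCoprime hk).injective
  | mul a b ha hb =>
    rw [Nat.coprime_mul_iff_right] at hk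
    simpa only [pow_mul, Function.comp_def] using (hb hk.2).comp (ha hk.1)

end SchurRing

/-- Schur–Wielandt theorem on multipliers: for an S-ring over a finite abelian group,
`X ↦ X^{(m)}` maps basic sets to basic sets when `gcd(m, |G|) = 1`. -/
theorem schurRing_pow_basic {G : Type*} [CommGroup G] [Fintype G]
    (A : SchurRing G) (X : Set G) (hX : X ∈ A.parts)
    (m : ℤ) (hm : Int.gcd m (Fintype.card G) = 1) :
    (fun x : G => x ^ m) '' X ∈ A.parts := by
  rw [← Nat.card_eq_fintype_card] at hm
  obtain ⟨k, hk, hmk⟩ := exists_coprime_forall_zpow_eq_pow hm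
  have hσ : (fun x : G => x ^ m) = powCoprime hk := funext fun x => by rw [hmk, powCoprime_apply]
  rw [hσ]
  exact (A.preservesASets_pow hk).image_mem_parts hX
end

section
/- Let A be a Schur ring over a finite abelian group G, H an A-subgroup of G, and let A_H denote the induced Schur ring on H and A_{G/H} the induced Schur ring on G/H. Then the dual S-ring of A_{G/H} equals the restriction of the dual S-ring of A to the annihilator subgroup H^⊥ of the dual group Ĝ. -/
/-!
Write `π : G → G/H`. For a basic set `X` and `z ∈ X`, the fibre `X ∩ zH` of `π` on `X` has as
many elements as there are ways to write `z = x h` with `x ∈ X`, `h ∈ H`; since `H` is a union of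
basic sets, the structure constants make this a number `λ_X > 0` independent of `z`. Hence
`(ψ ∘ π)(X) = λ_X · ψ(π X)` for every character `ψ` of `G/H`, so `ψ ↦ ψ ∘ π` maps the classes of
the dual of `A_{G/H}` onto the classes of the dual of `A` consisting of lifts, i.e. lying in `H^⊥`.
A class of the dual of `A` lies in `H^⊥` as soon as one member does: `χ(H)` is constant on the
class, being a sum of values on basic sets, and it is `|H|` or `0` according as `χ` is trivial on
`H` or not.
-/

open Pointwise

/-- The character sum `χ(S) = ∑_{s ∈ S} χ(s)`. -/
noncomputable def charSum {G : Type*} [Group G] (χ : G →* ℂ) (S : Set G) : ℂ :=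
  ∑ᶠ s ∈ S, χ s

/-- The partition of the dual group (complex characters of `G`) dual to a family
of subsets of `G`: characters are equivalent iff they have equal sums over every
member of the family. -/
def dualParts {G : Type*} [Group G] (parts : Set (Set G)) : Set (Set (G →* ℂ)) :=
  Set.range (fun χ₀ : G →* ℂ => {χ : G →* ℂ | ∀ S ∈ parts, charSum χ S = charSum χ₀ S})
theorem Set.Finite.finsum_mem_const {α R : Type*} [NonAssocSemiring R] {s : Set α} (hs : s.Finite)
    (c : R) : ∑ᶠ _ ∈ s, c = s.ncard * c := by
  rw [← finsum_one, Nat.cast_finsum_mem hs, finsum_mem_mul' _ _ hs]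
  simp

section

variable {G : Type*} [Group G]

theorem charSum_comp_eq_ncard_mul [Finite G] {K : Type*} [Group K] (f : G →* K) (ψ : K →* ℂ)
    {X : Set G} {n : ℕ} (hn : ∀ x ∈ X, (X ∩ f ⁻¹' {f x}).ncard = n) :
    charSum (ψ.comp f) X = n * charSum ψ (f '' X) := by
  have hX : ⋃ q ∈ f '' X, X ∩ f ⁻¹' {q} = X := by
    ext x
    simp only [Set.mem_iUnion, Set.mem_inter_iff, Set.mem_preimage, Set.mem_singleton_iff]
    exact ⟨fun ⟨_, _, hx, _⟩ => hx, fun hx => ⟨f x, Set.mem_image_of_mem f hx, hx, rfl⟩⟩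
  have hdisj : (f '' X).PairwiseDisjoint fun q => X ∩ f ⁻¹' {q} :=
    (Set.pairwiseDisjoint_fiber f _).mono fun _ => Set.inter_subset_right
  unfold charSum
  rw [← hX, finsum_mem_biUnion hdisj (Set.toFinite _) (fun _ _ => Set.toFinite _), hX,
    mul_finsum_mem]
  refine finsum_mem_congr rfl ?_
  rintro _ ⟨x, hx, rfl⟩
  rw [← hn x hx, ← (Set.toFinite _).finsum_mem_const]
  exact finsum_mem_congr rfl fun y hy => congrArg ψ hy.2

theorem charSum_subgroup_ne_zero_iff [Finite G] (χ : G →* ℂ) (H : Subgroup G) :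
    charSum χ H ≠ 0 ↔ ∀ h ∈ H, χ h = 1 := by
  have := Fintype.ofFinite H
  rw [charSum, ← finsum_set_coe_eq_finsum_mem, finsum_eq_sum_of_fintype]
  constructor
  · intro hne h hh
    by_contra hχ
    refine hne (sum_hom_units_eq_zero (χ.comp H.subtype) fun h1 => hχ ?_)
    exact DFunLike.congr_fun h1 ⟨h, hh⟩
  · intro h1
    simp [Finset.sum_congr rfl fun (h : H) _ => h1 h h.2]

theorem range_comp_mk' {M : Type*} [Monoid M] (H : Subgroup G) [H.Normal] :
    Set.range (fun ψ : G ⧸ H →* M => ψ.comp (QuotientGroup.mk' H)) =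
      {χ | ∀ h ∈ H, χ h = 1} := by
  ext χ
  constructor
  · rintro ⟨ψ, rfl⟩ h hh
    simp [(QuotientGroup.eq_one_iff h).2 hh]
  · intro hχ
    have hker : H ≤ χ.ker := fun h hh => χ.mem_ker.2 (hχ h hh)
    exact ⟨QuotientGroup.lift H χ hker, MonoidHom.ext fun g => QuotientGroup.lift_mk' H hker g⟩

noncomputable def mulCount (X Y : Set G) (z : G) : ℕ :=
  Set.ncard {xy : G × G | xy.1 ∈ X ∧ xy.2 ∈ Y ∧ xy.1 * xy.2 = z}

theorem ncard_fiber_mk_eq_mulCount (H : Subgroup G) [H.Normal] (X : Set G) (z : G) :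
    (X ∩ QuotientGroup.mk' H ⁻¹' {QuotientGroup.mk' H z}).ncard = mulCount X H z := by
  have hpairs : {xy : G × G | xy.1 ∈ X ∧ xy.2 ∈ (H : Set G) ∧ xy.1 * xy.2 = z}
      = (fun x => (x, x⁻¹ * z)) '' (X ∩ QuotientGroup.mk' H ⁻¹' {QuotientGroup.mk' H z}) := by
    ext ⟨x, y⟩
    simp only [Set.mem_ofPred_eq, Set.mem_image, Set.mem_inter_iff, Set.mem_preimage,
      Set.mem_singleton_iff, QuotientGroup.mk'_apply, QuotientGroup.eq, Prod.mk.injEq]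
    constructor
    · rintro ⟨hx, hy, rfl⟩
      exact ⟨x, ⟨hx, by rwa [inv_mul_cancel_left]⟩, rfl, by rw [inv_mul_cancel_left]⟩
    · rintro ⟨x, ⟨hx, hxz⟩, rfl, rfl⟩
      exact ⟨hx, hxz, mul_inv_cancel_left x z⟩
  rw [mulCount, hpairs, Set.ncard_image_of_injective _ fun _ _ h => congrArg Prod.fst h]

def dualClass (parts : Set (Set G)) (χ₀ : G →* ℂ) : Set (G →* ℂ) :=
  {χ | ∀ S ∈ parts, charSum χ S = charSum χ₀ S}

theorem dualParts_eq_range_dualClass (parts : Set (Set G)) :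
    dualParts parts = Set.range (dualClass parts) :=
  rfl

end

namespace SchurRing

variable {G : Type*} [Group G] (A : SchurRing G)

theorem pairwiseDisjoint_parts : A.parts.PairwiseDisjoint id :=
  fun X hX Y hY hXY => Set.disjoint_iff_inter_eq_empty.2 (A.disjoint X hX Y hY hXY)

theorem biUnion_parts_subset_eq {S : Set G} (hS : A.IsASet S) :
    ⋃ Y ∈ {Y | Y ∈ A.parts ∧ Y ⊆ S}, Y = S := by
  refine Set.Subset.antisymm (Set.iUnion₂_subset fun Y hY => hY.2) fun g hg => ?_
  obtain ⟨X, hX, hgX, hXS⟩ := hS g hg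
  exact Set.mem_biUnion ⟨hX, hXS⟩ hgX

variable [Finite G]

theorem charSum_eq_of_isASet {χ χ' : G →* ℂ} (h : ∀ X ∈ A.parts, charSum χ X = charSum χ' X)
    {S : Set G} (hS : A.IsASet S) : charSum χ S = charSum χ' S := by
  have hdisj : {Y | Y ∈ A.parts ∧ Y ⊆ S}.PairwiseDisjoint fun Y => Y :=
    A.pairwiseDisjoint_parts.subset fun Y hY => hY.1
  unfold charSum
  rw [← A.biUnion_parts_subset_eq hS, finsum_mem_biUnion hdisj (Set.toFinite _)
    (fun _ _ => Set.toFinite _), finsum_mem_biUnion hdisj (Set.toFinite _)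
    (fun _ _ => Set.toFinite _)]
  exact finsum_mem_congr rfl fun Y hY => h Y hY.1

theorem mulCount_of_isASet (X : Set G) {S : Set G} (hS : A.IsASet S) (z : G) :
    mulCount X S z = ∑ᶠ Y ∈ {Y | Y ∈ A.parts ∧ Y ⊆ S}, mulCount X Y z := by
  have hdisj : {Y | Y ∈ A.parts ∧ Y ⊆ S}.PairwiseDisjoint
      fun Y => {xy : G × G | xy.1 ∈ X ∧ xy.2 ∈ Y ∧ xy.1 * xy.2 = z} := by
    intro Y hY Y' hY' hne
    refine Set.disjoint_left.2 fun xy hxy hxy' => ?_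
    exact Set.disjoint_left.1 (A.pairwiseDisjoint_parts hY.1 hY'.1 hne) hxy.2.1 hxy'.2.1
  simp only [mulCount]
  rw [← Set.Finite.ncard_biUnion (Set.toFinite _) (fun _ _ => Set.toFinite _) hdisj]
  congr 1
  conv_lhs => rw [← A.biUnion_parts_subset_eq hS]
  ext xy
  simp only [Set.mem_iUnion, Set.mem_ofPred_eq, exists_prop]
  tauto

theorem mulCount_eq_of_isASet {X Z : Set G} (hX : X ∈ A.parts) (hZ : Z ∈ A.parts)
    {S : Set G} (hS : A.IsASet S) {z₁ z₂ : G} (h₁ : z₁ ∈ Z) (h₂ : z₂ ∈ Z) :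
    mulCount X S z₁ = mulCount X S z₂ := by
  rw [A.mulCount_of_isASet X hS, A.mulCount_of_isASet X hS]
  exact finsum_mem_congr rfl fun Y hY => A.struct_const X hX Y hY.1 Z hZ z₁ h₁ z₂ h₂

variable {H : Subgroup G}

theorem dualClass_subset_iff (hH : A.IsASet H) (χ₀ : G →* ℂ) :
    dualClass A.parts χ₀ ⊆ {χ | ∀ h ∈ H, χ h = 1} ↔ ∀ h ∈ H, χ₀ h = 1 := by
  refine ⟨fun hsub => hsub fun _ _ => rfl, fun hχ₀ χ hχ => ?_⟩
  rw [Set.mem_ofPred_eq, ← charSum_subgroup_ne_zero_iff, A.charSum_eq_of_isASet hχ hH]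
  exact (charSum_subgroup_ne_zero_iff χ₀ H).2 hχ₀

variable [H.Normal]

theorem ncard_fiber_mk_eq (hH : A.IsASet H) {X : Set G} (hX : X ∈ A.parts) {z₁ z₂ : G}
    (h₁ : z₁ ∈ X) (h₂ : z₂ ∈ X) :
    (X ∩ QuotientGroup.mk' H ⁻¹' {QuotientGroup.mk' H z₁}).ncard =
      (X ∩ QuotientGroup.mk' H ⁻¹' {QuotientGroup.mk' H z₂}).ncard := by
  rw [ncard_fiber_mk_eq_mulCount, ncard_fiber_mk_eq_mulCount]
  exact A.mulCount_eq_of_isASet hX hX hH h₁ h₂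

theorem charSum_comp_mk_eq_iff (hH : A.IsASet H) {X : Set G} (hX : X ∈ A.parts)
    (ψ ψ' : G ⧸ H →* ℂ) :
    charSum (ψ.comp (QuotientGroup.mk' H)) X = charSum (ψ'.comp (QuotientGroup.mk' H)) X ↔
      charSum ψ (QuotientGroup.mk' H '' X) = charSum ψ' (QuotientGroup.mk' H '' X) := by
  obtain ⟨z₀, hz₀⟩ := A.nonempty X hX
  have hfiber : ∀ x ∈ X, (X ∩ QuotientGroup.mk' H ⁻¹' {QuotientGroup.mk' H x}).ncard =
      (X ∩ QuotientGroup.mk' H ⁻¹' {QuotientGroup.mk' H z₀}).ncard :=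
    fun x hx => A.ncard_fiber_mk_eq hH hX hx hz₀
  have hpos : 0 < (X ∩ QuotientGroup.mk' H ⁻¹' {QuotientGroup.mk' H z₀}).ncard :=
    (Set.ncard_pos (Set.toFinite _)).2 ⟨z₀, hz₀, rfl⟩
  rw [charSum_comp_eq_ncard_mul _ _ hfiber, charSum_comp_eq_ncard_mul _ _ hfiber,
    mul_right_inj' (Nat.cast_ne_zero.2 hpos.ne')]

theorem comp_mk_mem_dualClass_iff (hH : A.IsASet H) (ψ ψ₀ : G ⧸ H →* ℂ) :
    ψ.comp (QuotientGroup.mk' H) ∈ dualClass A.parts (ψ₀.comp (QuotientGroup.mk' H)) ↔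
      ψ ∈ dualClass {Y | ∃ X ∈ A.parts, Y = QuotientGroup.mk' H '' X} ψ₀ := by
  refine ⟨fun h => ?_, fun h X hX => (A.charSum_comp_mk_eq_iff hH hX ψ ψ₀).2 (h _ ⟨X, hX, rfl⟩)⟩
  rintro _ ⟨X, hX, rfl⟩
  exact (A.charSum_comp_mk_eq_iff hH hX ψ ψ₀).1 (h X hX)

theorem image_comp_mk_dualClass (hH : A.IsASet H) (ψ₀ : G ⧸ H →* ℂ) :
    (fun ψ : G ⧸ H →* ℂ => ψ.comp (QuotientGroup.mk' H)) ''
        dualClass {Y | ∃ X ∈ A.parts, Y = QuotientGroup.mk' H '' X} ψ₀ =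
      dualClass A.parts (ψ₀.comp (QuotientGroup.mk' H)) := by
  have hpreimage : dualClass {Y | ∃ X ∈ A.parts, Y = QuotientGroup.mk' H '' X} ψ₀ =
      (fun ψ : G ⧸ H →* ℂ => ψ.comp (QuotientGroup.mk' H)) ⁻¹'
        dualClass A.parts (ψ₀.comp (QuotientGroup.mk' H)) :=
    Set.ext fun ψ => (A.comp_mk_mem_dualClass_iff hH ψ ψ₀).symm
  rw [hpreimage, Set.image_preimage_eq_of_subset]
  rw [range_comp_mk', A.dualClass_subset_iff hH]
  exact (range_comp_mk' H).subset ⟨ψ₀, rfl⟩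

end SchurRing

/-- Duality and quotients: the dual of `A_{G/H}`, transported to characters of `G`
via composition with the projection `G → G/H`, is exactly the restriction of the
dual of `A` to the annihilator `H^⊥`. -/
theorem dual_of_quotient_eq_restriction_to_perp {G : Type*} [CommGroup G] [Fintype G]
    (A : SchurRing G) (H : Subgroup G) (hH : A.IsASet (H : Set G)) :
    (fun C : Set ((G ⧸ H) →* ℂ) =>
        (fun χ : (G ⧸ H) →* ℂ => χ.comp (QuotientGroup.mk' H)) '' C) ''
      dualParts {Y : Set (G ⧸ H) | ∃ X ∈ A.parts, Y = (QuotientGroup.mk' H) '' X} =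
    {C : Set (G →* ℂ) | C ∈ dualParts A.parts ∧
      C ⊆ {χ : G →* ℂ | ∀ h ∈ H, χ h = 1}} := by
  calc _ = Set.range fun ψ₀ : G ⧸ H →* ℂ => dualClass A.parts (ψ₀.comp (QuotientGroup.mk' H)) := by
        rw [dualParts_eq_range_dualClass, ← Set.range_comp]
        exact congrArg Set.range (funext (A.image_comp_mk_dualClass hH))
    _ = dualClass A.parts '' {χ | ∀ h ∈ H, χ h = 1} := by
        rw [← range_comp_mk', ← Set.range_comp]
        rfl
    _ = _ := by
        ext C
        simp only [dualParts_eq_range_dualClass, Set.mem_image, Set.mem_range, Set.mem_ofPred_eq]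
        constructor
        · rintro ⟨χ₀, hχ₀, rfl⟩
          exact ⟨⟨χ₀, rfl⟩, (A.dualClass_subset_iff hH χ₀).2 hχ₀⟩
        · rintro ⟨⟨χ₀, rfl⟩, hsub⟩
          exact ⟨χ₀, (A.dualClass_subset_iff hH χ₀).1 hsub, rfl⟩
end

section
/- Let R be a finite commutative ring which is a product of Galois rings of pairwise coprime characteristics (a CG-ring), let K be a subgroup of R^× and J an ideal of R. Then the group K (viewed as a subset of R) is non-pure, i.e. K + I = K for some nonzero ideal I of R, if and only if K contains a subgroup of the form 1 + I for some nonzero ideal I of R with I_p ≠ R_p for all p dividing the characteristic of I. -/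
open Pointwise

/-- A Galois ring: a finite commutative local ring whose radical is `pR` for a prime `p`. -/
def IsGaloisRing (R : Type*) [CommRing R] : Prop :=
  ∃ p : ℕ, p.Prime ∧ IsLocalRing R ∧ nilradical R = Ideal.span {(p : R)}

/-- A CG-ring: a finite commutative ring isomorphic to a product of Galois rings of
pairwise coprime characteristics. -/
def IsCGRing (R : Type*) [CommRing R] : Prop :=
  ∃ (n : ℕ) (S : Fin n → Type) (instR : ∀ i, CommRing (S i)) (_ : ∀ i, Fintype (S i)),
    letI : ∀ i, CommRing (S i) := instR
    (∀ i, IsGaloisRing (S i)) ∧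
    (∀ i j, i ≠ j → Nat.Coprime (ringChar (S i)) (ringChar (S j))) ∧
    Nonempty (R ≃+* ∀ i, S i)

/-- A nonempty subset `X` of a ring is pure if `X + I = X` forces `I = 0`. -/
def IsPureSet {R : Type*} [CommRing R] (X : Set R) : Prop :=
  ∀ I : Ideal R, X + (I : Set R) = X → I = ⊥

/-- A subgroup `K ≤ R^×` of a CG-ring is non-pure iff it contains a subgroup of the
form `1 + I` for a nonzero ideal `I` with `I_p ≠ R_p` for all `p` dividing the
characteristic of `I` (equivalently, `I` contained in the radical of `R`). -/
theorem subgroup_nonpure_iff {R : Type*} [CommRing R] [Fintype R]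
    (hCG : IsCGRing R) (K : Subgroup Rˣ) :
    (¬ IsPureSet (((↑) : Rˣ → R) '' (K : Set Rˣ))) ↔
    ∃ I : Ideal R, I ≠ ⊥ ∧ I ≤ Ideal.jacobson (⊥ : Ideal R) ∧
      ∀ x ∈ I, ∃ k ∈ K, ((k : Rˣ) : R) = 1 + x := by
  constructor
  · intro h
    rw [IsPureSet] at h
    push_neg at h
    obtain ⟨I, hKI, hI⟩ := h
    have hmem : ∀ x ∈ I, (1 : R) + x ∈ ((↑) : Rˣ → R) '' (K : Set Rˣ) := by
      intro x hx
      rw [← hKI]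
      exact Set.add_mem_add ⟨1, K.one_mem, rfl⟩ hx
    refine ⟨I, hI, ?_, ?_⟩
    · intro x hx
      rw [Ideal.mem_jacobson_bot]
      intro y
      obtain ⟨k, _, hke⟩ := hmem (x * y) (I.mul_mem_right y hx)
      rw [add_comm] at hke
      exact ⟨k, hke⟩
    · intro x hx
      obtain ⟨k, hk, hke⟩ := hmem x hx
      exact ⟨k, hk, hke⟩
  · rintro ⟨I, hI, -, hsub⟩
    intro hpure
    apply hI
    apply hpure I
    apply Set.Subset.antisymm
    · rintro r hr
      rw [Set.mem_add] at hr
      obtain ⟨a, ⟨k, hk, rfl⟩, i, hi, rfl⟩ := hr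
      obtain ⟨k', hk', hk'e⟩ := hsub ((↑k⁻¹ : R) * i) (I.mul_mem_left _ hi)
      refine ⟨k * k', K.mul_mem hk hk', ?_⟩
      push_cast
      rw [hk'e, mul_add, mul_one, ← mul_assoc, Units.mul_inv, one_mul]
    · intro r hr
      exact Set.mem_add.2 ⟨r, hr, 0, I.zero_mem, add_zero r⟩
end

section
/- Let R be a CG-ring of odd characteristic, K ≤ R^× a pure subgroup, and J an ideal of R with J_p ≠ R_p for every prime p dividing the characteristic of R. Then the image π_J(K) of K in R/J is a pure subgroup of (R/J)^×, and the set c_J·K is pure in R, where c_J is the characteristic of J. -/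
open Pointwise

/-!
Every ideal of a CG-ring is generated by an integer: a Galois ring has only the ideals `p^b R`, and
the Chinese remainder theorem glues the components. For `J = dR` in the radical and `c = c_J` this
gives that the annihilator of `c` is exactly `J`, that `(1 + J)^c = 1`, and, the characteristic
being odd, that every element of `1 + cI` is a `c`-th power of an element of `1 + I` for an ideal
`I` in the radical; such roots are built one prime factor `q` of `c` at a time, doubling the
`b`-adic precision of an approximate root of `1 + q b y` at each step.

If `π_J(K)` absorbs an ideal with preimage `I`, then `1 + I ⊆ K (1 + J)`, so
`1 + cI ⊆ K^c ⊆ K` and purity of `K` forces `cI = 0`, that is `I ⊆ J`. Multiplication by `c`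
identifies `R/J` with `cR`, which carries purity from `π_J(K)` over to `cK`.
-/

open Ideal

section OneAddPow

variable {R : Type*} [CommRing R]

theorem prime_mul_sq_dvd_one_add_pow_sub_sub {q : ℕ} (hq : q.Prime) (hq2 : q ≠ 2) {x : R}
    (hx : (q : R) ∣ x) : (q : R) * x ^ 2 ∣ (1 + x) ^ q - 1 - q * x := by
  have hq3 : 3 ≤ q := by have := hq.two_le; omega
  rw [add_comm, add_pow, show q + 1 = q - 1 + 1 + 1 by omega, Finset.sum_range_succ',
    Finset.sum_range_succ']
  simp only [zero_add, pow_one, one_pow, mul_one, pow_zero, Nat.choose_zero_right,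
    Nat.choose_one_right, Nat.cast_one, add_sub_cancel_right]
  rw [mul_comm x, add_sub_cancel_right]
  refine Finset.dvd_sum fun k hk => ?_
  rw [Finset.mem_range] at hk
  rw [mul_comm (q : R), show k + 1 + 1 = 2 + k by omega, pow_add, mul_assoc]
  refine mul_dvd_mul_left _ ?_
  rcases (show 2 + k < q ∨ 2 + k = q by omega) with hlt | heq
  · exact (Nat.cast_dvd_cast (hq.dvd_choose_self (by omega) hlt)).mul_left _
  · exact (hx.trans (dvd_pow_self x (by omega))).mul_right _

theorem mul_natCast_dvd_one_add_pow_sub_one {q : ℕ} {a x : R} (hqa : (q : R) ∣ a)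
    (hax : a ∣ x) : a * q ∣ (1 + x) ^ q - 1 := by
  have h := sq_dvd_add_pow_sub_sub x 1 q
  simp only [one_pow, one_mul] at h
  have hsplit : (1 + x) ^ q - 1 = ((1 + x) ^ q - x * q - 1) + x * q := by ring
  rw [hsplit]
  exact dvd_add ((mul_dvd_mul hax (hqa.trans hax)).trans (by rw [← sq]; exact h))
    (mul_dvd_mul_right hax _)

theorem mul_dvd_one_add_pow_sub_one {a : R} {m : ℕ}
    (hm : ∀ q : ℕ, q.Prime → q ∣ m → (q : R) ∣ a) {x : R} (hx : a ∣ x) :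
    a * m ∣ (1 + x) ^ m - 1 := by
  induction m using induction_on_primes with
  | zero => simp
  | one => simpa using hx
  | prime_mul q m hq ih =>
    obtain ⟨s, hs⟩ := ih fun r hr hrm => hm r hr (hrm.mul_left q)
    have hqa : (q : R) ∣ a * m := (hm q hq (dvd_mul_right q m)).mul_right _
    have := mul_natCast_dvd_one_add_pow_sub_one hqa (dvd_mul_right (a * m) s)
    rw [mul_comm q m, pow_mul, show (1 + x) ^ m = 1 + a * m * s by rw [← hs]; ring]
    convert this using 1
    push_cast
    ring

theorem exists_one_add_pow_prime_eq {q : ℕ} (hq : q.Prime) (hq2 : q ≠ 2) {b : R}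
    (hqb : (q : R) ∣ b) (hb : IsNilpotent b) (y : R) :
    ∃ x, b ∣ x ∧ (1 + x) ^ q = 1 + q * b * y := by
  obtain ⟨n, hn⟩ := hb
  replace hn : b ^ 2 ^ n = 0 := pow_eq_zero_of_le (Nat.lt_two_pow_self).le hn
  induction n generalizing b y with
  | zero => exact ⟨0, dvd_zero b, by simp_all⟩
  | succ n ih =>
    have hby : IsNilpotent (b * y) := ⟨2 ^ (n + 1), by rw [mul_pow, hn, zero_mul]⟩
    rw [pow_succ', pow_mul] at hn
    obtain ⟨w, hw⟩ := prime_mul_sq_dvd_one_add_pow_sub_sub hq hq2 (hqb.mul_right y)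
    obtain ⟨u, hu⟩ := hby.isUnit_one_add.pow q
    -- `1 + b y` is a `q`-th root of `1 + q b y` up to a factor `1 + q b² z`, whose `q`-th root
    -- comes from the induction hypothesis at `b²`.
    obtain ⟨x', hbx', hx'⟩ := ih (dvd_pow hqb two_ne_zero) (-(↑u⁻¹ * y ^ 2 * w)) hn
    refine ⟨b * y + x' + b * y * x', ?_, ?_⟩
    · exact dvd_add (dvd_add (dvd_mul_right b y) ((dvd_pow_self b two_ne_zero).trans hbx'))
        ((dvd_mul_right b y).mul_right x')
    · rw [show 1 + (b * y + x' + b * y * x') = (1 + b * y) * (1 + x') by ring, mul_pow, hx',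
        ← hu]
      linear_combination hu + hw - (q * b ^ 2 * y ^ 2 * w) * u.mul_inv

theorem exists_one_add_pow_eq {b : R} {m : ℕ}
    (hm : ∀ q : ℕ, q.Prime → q ∣ m → q ≠ 2 ∧ (q : R) ∣ b) (hb : IsNilpotent b)
    (y : R) : ∃ x, b ∣ x ∧ (1 + x) ^ m = 1 + m * b * y := by
  induction m using induction_on_primes generalizing y with
  | zero => exact ⟨0, dvd_zero b, by simp⟩
  | one => exact ⟨b * y, dvd_mul_right b y, by simp⟩
  | prime_mul q m hq ih =>
    have hqb := hm q hq (dvd_mul_right q m)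
    obtain ⟨_, ⟨y₁, rfl⟩, h₁⟩ := exists_one_add_pow_prime_eq hq hqb.1 (hqb.2.mul_left m)
      ((Commute.all _ _).isNilpotent_mul_left hb) y
    obtain ⟨x, hx, h⟩ := ih (fun r hr hrm => hm r hr (hrm.mul_left q)) y₁
    refine ⟨x, hx, ?_⟩
    rw [mul_comm q m, pow_mul, h, h₁]
    push_cast
    ring

end OneAddPow

theorem Nat.Prime.dvd_of_dvd_ringChar_of_isNilpotent {R : Type*} [CommRing R] {q e : ℕ}
    (hq : q.Prime) (hqR : q ∣ ringChar R) (he : IsNilpotent (e : R)) : q ∣ e := by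
  obtain ⟨k, hk⟩ := he
  exact hq.dvd_of_dvd_pow (hqR.trans (ringChar.dvd (by push_cast; exact hk)))

theorem Ideal.eq_pi_map_evalRingHom {ι : Type*} [Fintype ι] {S : ι → Type*}
    [∀ i, CommRing (S i)] (W : Ideal (∀ i, S i)) :
    W = Ideal.pi fun i => W.map (Pi.evalRingHom S i) := by
  classical
  refine le_antisymm (fun x hx i => mem_map_of_mem _ hx) fun x hx => ?_
  have hsurj (i : ι) : Function.Surjective (Pi.evalRingHom S i) :=
    fun z => ⟨Pi.single i z, Pi.single_eq_same i z⟩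
  choose w hw hwx using fun i => (mem_map_iff_of_surjective _ (hsurj i)).mp (hx i)
  have hx : x = ∑ i, Pi.single i 1 * w i := by
    funext j
    rw [Finset.sum_apply, Finset.sum_eq_single j (fun i _ hij => by simp [Pi.single_eq_of_ne' hij])
      (by simp)]
    simp [← hwx j]
  exact hx ▸ W.sum_mem fun i _ => W.mul_mem_left _ (hw i)

theorem IsLocalRing.exists_eq_span_pow {T : Type*} [CommRing T] [IsLocalRing T] {a : T}
    (hm : maximalIdeal T = span {a}) (ha : IsNilpotent a) (W : Ideal T) :
    ∃ b : ℕ, W = span {a ^ b} := by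
  classical
  obtain ⟨n, hn⟩ := ha
  by_cases hW : W = ⊥
  · exact ⟨n, by rw [hW, hn, span_singleton_eq_bot.mpr rfl]⟩
  have hex : ∃ k, ¬W ≤ span {a ^ k} :=
    ⟨n, by rwa [hn, span_singleton_eq_bot.mpr rfl, le_bot_iff]⟩
  obtain ⟨b, hb⟩ : ∃ b, Nat.find hex = b + 1 :=
    Nat.exists_eq_succ_of_ne_zero fun h => Nat.find_spec hex (by simp [h])
  have hWb : W ≤ span {a ^ b} := not_not.mp (Nat.find_min hex (by omega))
  obtain ⟨x, hxW, hx⟩ := SetLike.not_le_iff_exists.mp (hb ▸ Nat.find_spec hex)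
  obtain ⟨u, rfl⟩ := mem_span_singleton'.mp (hWb hxW)
  have hu : IsUnit u := by
    by_contra hu
    obtain ⟨v, rfl⟩ := mem_span_singleton'.mp (hm ▸ (mem_maximalIdeal u).mpr hu)
    exact hx (mem_span_singleton'.mpr ⟨v, by ring⟩)
  refine ⟨b, le_antisymm hWb ((span_singleton_le_iff_mem _).mpr ?_)⟩
  obtain ⟨v, hv⟩ := hu.exists_left_inv
  simpa [← mul_assoc, hv] using W.mul_mem_left v hxW

def IsNatPrincipalIdealRing (R : Type*) [CommRing R] : Prop :=
  ∀ I : Ideal R, ∃ d : ℕ, I = span {(d : R)}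

theorem IsNatPrincipalIdealRing.of_ringEquiv {R R' : Type*} [CommRing R] [CommRing R']
    (e : R ≃+* R') (h : IsNatPrincipalIdealRing R') : IsNatPrincipalIdealRing R := by
  intro W
  obtain ⟨d, hd⟩ := h (W.map (e : R →+* R'))
  refine ⟨d, ?_⟩
  rw [← Ideal.map_of_equiv e (I := W), hd, map_span, Set.image_singleton, map_natCast]

theorem isNatPrincipalIdealRing_pi {ι : Type*} [Fintype ι] {S : ι → Type*}
    [∀ i, CommRing (S i)] (hS : ∀ i, IsNatPrincipalIdealRing (S i))
    (hchar : ∀ i, ringChar (S i) ≠ 0)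
    (hcop : Pairwise fun i j => Nat.Coprime (ringChar (S i)) (ringChar (S j))) :
    IsNatPrincipalIdealRing (∀ i, S i) := by
  intro W
  choose d hd using fun i => hS i (W.map (Pi.evalRingHom S i))
  obtain ⟨D, hD⟩ := Nat.chineseRemainderOfFinset d (fun i => ringChar (S i)) Finset.univ
    (fun i _ => hchar i) (fun i _ j _ hij => hcop hij)
  have hDi (i : ι) : (D : S i) = d i :=
    (CharP.natCast_eq_natCast (S i) (ringChar (S i))).mpr (hD i (Finset.mem_univ i))
  refine ⟨D, ?_⟩
  rw [W.eq_pi_map_evalRingHom, ← pi_span]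
  congr! 3 with i
  rw [hd, Pi.natCast_apply, hDi]

theorem IsGaloisRing.isNatPrincipalIdealRing {T : Type*} [CommRing T] [Finite T]
    (hT : IsGaloisRing T) : IsNatPrincipalIdealRing T := by
  obtain ⟨p, -, _, hnil⟩ := hT
  have hm : IsLocalRing.maximalIdeal T = span {(p : T)} := by
    rw [← hnil, ← IsLocalRing.jacobson_eq_maximalIdeal ⊥ bot_ne_top, jacobson_bot,
      Ring.jacobson_eq_nilradical_of_krullDimLE_zero]
  intro W
  obtain ⟨b, rfl⟩ := IsLocalRing.exists_eq_span_pow hm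
    (mem_nilradical.mp (hnil ▸ mem_span_singleton_self _)) W
  exact ⟨p ^ b, by push_cast; rfl⟩

theorem IsCGRing.isNatPrincipalIdealRing {R : Type*} [CommRing R] (hR : IsCGRing R) :
    IsNatPrincipalIdealRing R := by
  obtain ⟨n, S, _, _, hGal, hcop, ⟨e⟩⟩ := hR
  exact .of_ringEquiv e <| isNatPrincipalIdealRing_pi (fun i => (hGal i).isNatPrincipalIdealRing)
    (fun i => CharP.char_ne_zero_of_finite (S i) _) hcop

section Pure

variable {R : Type*} [CommRing R]

theorem Ideal.natCast_exponent_mul_of_mem {J : Ideal R} {x : R} (hx : x ∈ J) :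
    (AddMonoid.exponent J : R) * x = 0 := by
  rw [← nsmul_eq_mul]
  exact congrArg Subtype.val (AddMonoid.exponent_nsmul_eq_zero (⟨x, hx⟩ : J))

theorem Ideal.exponent_dvd_ringChar (J : Ideal R) : AddMonoid.exponent J ∣ ringChar R :=
  AddMonoid.exponent_dvd_of_forall_nsmul_eq_zero fun x =>
    Subtype.ext (by simp [nsmul_eq_mul])

theorem isPureSet_iff {X : Set R} :
    IsPureSet X ↔ ∀ I : Ideal R, (∀ x ∈ X, ∀ i ∈ I, x + i ∈ X) → I = ⊥ := by
  exact forall_congr' fun I => imp_congr_left ⟨fun h x hx i hi => h ▸ Set.add_mem_add hx hi,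
    fun h => (Set.add_subset_iff.mpr h).antisymm (Set.subset_add_left X I.zero_mem)⟩

theorem le_nilradical_of_forall_exists_unit_sub_mem [Finite R] {I J : Ideal R}
    (hJ : J ≤ nilradical R) (h : ∀ z ∈ I, ∃ u : Rˣ, (u : R) - (1 + z) ∈ J) :
    I ≤ nilradical R := by
  rw [← Ring.jacobson_eq_nilradical_of_krullDimLE_zero, ← jacobson_bot]
  intro x hx
  refine mem_jacobson_bot.mpr fun y => ?_
  obtain ⟨u, hu⟩ := h (x * y) (I.mul_mem_right y hx)
  have hunit := (mem_nilradical.mp (hJ (J.neg_mem hu))).isUnit_add_left_of_commute u.isUnit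
    (Commute.all _ _)
  convert hunit using 1
  ring

theorem IsPureSet.mul_eq_zero_of_one_add_mul_mem {K : Subgroup Rˣ}
    (hK : IsPureSet (((↑) : Rˣ → R) '' K)) {I : Ideal R} {a : R}
    (h : ∀ y ∈ I, ∃ k ∈ K, (k : R) = 1 + a * y) {y : R} (hy : y ∈ I) : a * y = 0 := by
  have hI : span {a} * I = ⊥ := by
    refine isPureSet_iff.mp hK _ ?_
    rintro _ ⟨k, hk, rfl⟩ _ hi
    obtain ⟨z, hz, rfl⟩ := mem_span_singleton_mul.mp hi
    obtain ⟨k', hk', hk'z⟩ := h (↑k⁻¹ * z) (I.mul_mem_left _ hz)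
    refine ⟨k * k', K.mul_mem hk hk', ?_⟩
    rw [Units.val_mul, hk'z]
    linear_combination a * z * k.mul_inv
  exact (Submodule.mem_bot R).mp (hI ▸ mul_mem_mul (mem_span_singleton_self a) hy)

theorem isPureSet_image_mul {X : Set R} {a : R} {J : Ideal R} (hJ : ∀ x, a * x = 0 ↔ x ∈ J)
    (hXJ : IsPureSet (Ideal.Quotient.mk J '' X)) (hX : X.Nonempty) :
    IsPureSet ((fun x : R => a * x) '' X) := by
  refine isPureSet_iff.mpr fun I hI => ?_
  set I' : Ideal R := Submodule.comap (LinearMap.mulLeft R a) I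
  have hI'J : I' ≤ J := by
    rw [← mk_ker (I := J), ← map_eq_bot_iff_le_ker]
    refine isPureSet_iff.mp hXJ _ ?_
    rintro _ ⟨k, hk, rfl⟩ _ hi
    obtain ⟨x, hx, rfl⟩ := (mem_map_iff_of_surjective _ Ideal.Quotient.mk_surjective).mp hi
    obtain ⟨k', hk', hk'e⟩ := hI _ ⟨k, hk, rfl⟩ _ hx
    refine ⟨k', hk', ?_⟩
    simp only [LinearMap.mulLeft_apply] at hk'e
    rw [← map_add, Ideal.Quotient.eq, ← hJ, mul_sub, hk'e, mul_add, sub_self]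
  obtain ⟨k, hk⟩ := hX
  refine eq_bot_iff.mpr fun i hi => ?_
  obtain ⟨k', -, hk'⟩ := hI _ ⟨k, hk, rfl⟩ i hi
  have hi' : a * (k' - k) = i := by
    beta_reduce at hk'
    rw [mul_sub, hk', add_sub_cancel_left]
  rw [Submodule.mem_bot, ← hi']
  exact (hJ _).mpr (hI'J (show a * (k' - k) ∈ I from hi' ▸ hi))

end Pure

namespace IsNatPrincipalIdealRing

variable {R : Type*} [CommRing R]

theorem exists_dvd_ringChar (hR : IsNatPrincipalIdealRing R) (I : Ideal R) :
    ∃ d, d ∣ ringChar R ∧ I = span {(d : R)} := by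
  obtain ⟨d, rfl⟩ := hR I
  refine ⟨d.gcd (ringChar R), Nat.gcd_dvd_right _ _, le_antisymm ?_ ?_⟩ <;>
    rw [span_singleton_le_span_singleton]
  · exact Nat.cast_dvd_cast (Nat.gcd_dvd_left _ _)
  · refine ⟨d.gcdA (ringChar R), ?_⟩
    have h := congrArg (Int.cast : ℤ → R) (Nat.gcd_eq_gcd_ab d (ringChar R))
    push_cast [ringChar.Nat.cast_ringChar] at h
    rw [h, zero_mul, add_zero]

theorem natCast_exponent_mul_eq_zero_iff (hR : IsNatPrincipalIdealRing R) (hN : ringChar R ≠ 0)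
    (J : Ideal R) (x : R) : (AddMonoid.exponent J : R) * x = 0 ↔ x ∈ J := by
  refine ⟨fun hx => ?_, J.natCast_exponent_mul_of_mem⟩
  set c := AddMonoid.exponent J
  obtain ⟨d, hdN, rfl⟩ := hR.exists_dvd_ringChar J
  obtain ⟨f, hf⟩ := hR (LinearMap.ker (LinearMap.mulLeft R (c : R)))
  have hxf : x ∈ span {(f : R)} := hf ▸ hx
  have hcf : ringChar R ∣ c * f := by
    have hf' : (f : R) ∈ LinearMap.ker (LinearMap.mulLeft R (c : R)) :=
      hf ▸ mem_span_singleton_self _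
    exact ringChar.dvd (by push_cast; exact hf')
  have hc : c ∣ ringChar R / d :=
    AddMonoid.exponent_dvd_of_forall_nsmul_eq_zero fun ⟨y, hy⟩ => by
      obtain ⟨r, rfl⟩ := mem_span_singleton.mp hy
      exact Subtype.ext <| by
        simp [nsmul_eq_mul, ← mul_assoc, ← Nat.cast_mul, Nat.div_mul_cancel hdN]
  have hdf : d ∣ f := by
    refine Nat.dvd_of_mul_dvd_mul_right (Nat.div_pos (Nat.le_of_dvd (Nat.pos_of_ne_zero hN) hdN)
      (Nat.pos_of_dvd_of_pos hdN (Nat.pos_of_ne_zero hN))) ?_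
    rw [Nat.mul_div_cancel' hdN, mul_comm]
    exact hcf.trans (Nat.mul_dvd_mul_right hc f)
  exact (span_singleton_le_span_singleton.mpr (Nat.cast_dvd_cast hdf)) hxf

theorem one_add_pow_exponent_eq_one (hR : IsNatPrincipalIdealRing R) {J : Ideal R}
    (hJ : J ≤ nilradical R) {j : R} (hj : j ∈ J) : (1 + j) ^ AddMonoid.exponent J = 1 := by
  obtain ⟨d, rfl⟩ := hR J
  have hd := mem_span_singleton_self (d : R)
  have h := mul_dvd_one_add_pow_sub_one (m := AddMonoid.exponent (span {(d : R)}))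
    (fun q hq hqc => Nat.cast_dvd_cast (hq.dvd_of_dvd_ringChar_of_isNilpotent
      (hqc.trans (exponent_dvd_ringChar _)) (hJ hd))) (mem_span_singleton.mp hj)
  rwa [mul_comm, natCast_exponent_mul_of_mem hd, zero_dvd_iff, sub_eq_zero] at h

theorem pow_exponent_eq_of_sub_mem (hR : IsNatPrincipalIdealRing R) {J : Ideal R}
    (hJ : J ≤ nilradical R) {a b : R} (ha : IsUnit a) (hab : b - a ∈ J) :
    b ^ AddMonoid.exponent J = a ^ AddMonoid.exponent J := by
  obtain ⟨u, rfl⟩ := ha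
  have hb : b = u * (1 + ↑u⁻¹ * (b - u)) := by
    rw [mul_add, ← mul_assoc, u.mul_inv]
    ring
  rw [hb, mul_pow, hR.one_add_pow_exponent_eq_one hJ (J.mul_mem_left _ hab), mul_one]

theorem exists_one_add_pow_eq_one_add_mul (hR : IsNatPrincipalIdealRing R)
    (hodd : Odd (ringChar R)) {m : ℕ} (hm : m ∣ ringChar R) {I : Ideal R}
    (hI : I ≤ nilradical R) {y : R} (hy : y ∈ I) : ∃ x ∈ I, (1 + x) ^ m = 1 + m * y := by
  obtain ⟨e, rfl⟩ := hR I
  obtain ⟨t, rfl⟩ := mem_span_singleton.mp hy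
  have he : IsNilpotent (e : R) := hI (mem_span_singleton_self _)
  obtain ⟨x, hx, h⟩ := exists_one_add_pow_eq (m := m) (fun q hq hqm =>
    ⟨fun h2 => hodd.not_two_dvd_nat (h2 ▸ hqm.trans hm),
      Nat.cast_dvd_cast (hq.dvd_of_dvd_ringChar_of_isNilpotent (hqm.trans hm) he)⟩) he t
  exact ⟨x, mem_span_singleton.mpr hx, by rw [h, mul_assoc]⟩

theorem isPureSet_image_mk [Finite R] (hR : IsNatPrincipalIdealRing R) (hodd : Odd (ringChar R))
    {K : Subgroup Rˣ} (hK : IsPureSet (((↑) : Rˣ → R) '' K)) {J : Ideal R}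
    (hJ : J ≤ jacobson ⊥) :
    IsPureSet (Ideal.Quotient.mk J '' (((↑) : Rˣ → R) '' K)) := by
  rw [jacobson_bot, Ring.jacobson_eq_nilradical_of_krullDimLE_zero] at hJ
  refine isPureSet_iff.mpr fun I' hI' => ?_
  set I := I'.comap (Ideal.Quotient.mk J)
  have hlift : ∀ z ∈ I, ∃ k ∈ K, (k : R) - (1 + z) ∈ J := fun z hz => by
    obtain ⟨_, ⟨k, hk, rfl⟩, hkz⟩ := hI' _ ⟨1, ⟨1, K.one_mem, rfl⟩, rfl⟩ _ hz
    exact ⟨k, hk, Ideal.Quotient.eq.mp (by rw [hkz, map_add, map_one])⟩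
  have hI : I ≤ nilradical R := le_nilradical_of_forall_exists_unit_sub_mem hJ fun z hz =>
    (hlift z hz).imp fun k hk => hk.2
  have hcI : ∀ y ∈ I, (AddMonoid.exponent J : R) * y = 0 := by
    refine fun y => hK.mul_eq_zero_of_one_add_mul_mem fun z hz => ?_
    obtain ⟨x, hx, hxz⟩ :=
      hR.exists_one_add_pow_eq_one_add_mul hodd J.exponent_dvd_ringChar hI hz
    obtain ⟨k, hk, hkx⟩ := hlift x hx
    refine ⟨k ^ AddMonoid.exponent J, K.pow_mem hk _, ?_⟩
    rw [Units.val_pow_eq_pow_val,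
      hR.pow_exponent_eq_of_sub_mem hJ (mem_nilradical.mp (hI hx)).isUnit_one_add hkx, hxz]
  rw [← map_comap_of_surjective _ Ideal.Quotient.mk_surjective I', map_eq_bot_iff_le_ker, mk_ker]
  exact fun y hy => (hR.natCast_exponent_mul_eq_zero_iff hodd.pos.ne' J y).mp (hcI y hy)

end IsNatPrincipalIdealRing

/-- Over a CG-ring of odd characteristic: if `K ≤ R^×` is pure and `J` is an ideal
with `J_p ≠ R_p` for all `p` (i.e. `J` contained in the radical), then the image of
`K` in `R/J` is pure, and the set `c_J·K` is pure, `c_J` the characteristic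
(additive exponent) of `J`. -/
theorem pure_subgroup_quotient_and_multiple_pure {R : Type*} [CommRing R] [Fintype R]
    (hCG : IsCGRing R) (hodd : Odd (ringChar R))
    (K : Subgroup Rˣ) (hK : IsPureSet (((↑) : Rˣ → R) '' (K : Set Rˣ)))
    (J : Ideal R) (hJ : J ≤ Ideal.jacobson (⊥ : Ideal R)) :
    IsPureSet ((fun x : R => Ideal.Quotient.mk J x) '' (((↑) : Rˣ → R) '' (K : Set Rˣ))) ∧
    IsPureSet ((fun x : R => ((AddMonoid.exponent J : ℕ) : R) * x) ''
      (((↑) : Rˣ → R) '' (K : Set Rˣ))) := by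
  have hR := hCG.isNatPrincipalIdealRing
  have hquot := hR.isPureSet_image_mk hodd hK hJ
  exact ⟨hquot, isPureSet_image_mul (hR.natCast_exponent_mul_eq_zero_iff hodd.pos.ne' J) hquot
    ⟨1, 1, K.one_mem, rfl⟩⟩
end

section
/- Let R be a CG-ring of odd characteristic, and let K ≤ R^×. Denote by r_p the degree of the residue field of R_p over its prime field, and by U_p the group of principal units 1 + rad(R_p) of R_p. Then K is pure if and only if for every prime p dividing the characteristic of R with R_p not a field, the rank of the abelian p-group K ∩ U_p is strictly less than r_p. -/
open Pointwise

/-!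
Each `S i` is a finite chain ring with maximal ideal `(p)`, so every nonzero ideal contains the
minimal ideal `M = (p ^ (n - 1))`, which is additively isomorphic to the residue field, i.e. to
`(ℤ/p)^r`. Since `u + a = u (1 + u⁻¹ a)`, the set `K` absorbs an ideal `I` iff `1 + I ⊆ K`; hence
`K` is impure iff `1 + M ⊆ K` for the minimal ideal `M` of some factor. For a field factor this
is impossible (`1 + M` contains an element with a zero coordinate). Otherwise `M² = 0`, so
`1 + M` is a subgroup isomorphic to `(ℤ/p)^r`; conversely, for odd `p` every principal unit
`1 + w` of order dividing `p` has `p w = 0`, so lies in `1 + M`, and an elementary abelian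
subgroup of rank `r` of `K ∩ U_p` fills all of `1 + M` by counting.
-/

open IsLocalRing

theorem pow_eq_zero_iff_nilpotencyClass_le_of_isNilpotent {M : Type*} [MonoidWithZero M] {x : M}
    (hx : IsNilpotent x) {k : ℕ} : x ^ k = 0 ↔ nilpotencyClass x ≤ k :=
  ⟨fun h ↦ Nat.sInf_le h, fun h ↦ pow_eq_zero_of_le h (pow_nilpotencyClass hx)⟩

/-- For `π = 0` this is `1`. -/
noncomputable def socleGen {M : Type*} [MonoidWithZero M] (π : M) : M :=
  π ^ (nilpotencyClass π - 1)

section Socle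

variable {S : Type*} [CommRing S] [IsLocalRing S] [Finite S] {π : S}

theorem isNilpotent_of_maximalIdeal_eq_span (hπ : maximalIdeal S = Ideal.span {π}) :
    IsNilpotent π :=
  Ring.KrullDimLE.isNilpotent_iff_mem_maximalIdeal.2 (hπ ▸ Ideal.mem_span_singleton_self π)

theorem pow_eq_zero_iff_nilpotencyClass_le (hπ : maximalIdeal S = Ideal.span {π}) {k : ℕ} :
    π ^ k = 0 ↔ nilpotencyClass π ≤ k :=
  pow_eq_zero_iff_nilpotencyClass_le_of_isNilpotent (isNilpotent_of_maximalIdeal_eq_span hπ)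

theorem exists_eq_pow_mul_of_ne_zero (hπ : maximalIdeal S = Ideal.span {π}) {x : S}
    (hx : x ≠ 0) : ∃ k u, IsUnit u ∧ x = π ^ k * u := by
  have hfin : FiniteMultiplicity π x := by
    refine ⟨nilpotencyClass π, fun h ↦ hx ?_⟩
    rwa [(pow_eq_zero_iff_nilpotencyClass_le hπ).2 (Nat.le_succ _), zero_dvd_iff] at h
  obtain ⟨u, hxu, hu⟩ := hfin.exists_eq_pow_mul_and_not_dvd
  refine ⟨_, u, ?_, hxu⟩
  by_contra hnu
  exact hu (Ideal.mem_span_singleton.1 (hπ ▸ (mem_maximalIdeal u).2 hnu))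

theorem socleGen_ne_zero (hπ : maximalIdeal S = Ideal.span {π}) : socleGen π ≠ 0 :=
  pow_pred_nilpotencyClass (isNilpotent_of_maximalIdeal_eq_span hπ)

theorem mul_socleGen (hπ : maximalIdeal S = Ideal.span {π}) : π * socleGen π = 0 := by
  rw [socleGen, ← pow_succ', pow_eq_zero_iff_nilpotencyClass_le hπ]
  omega

theorem mem_span_socleGen_of_mul_eq_zero (hπ : maximalIdeal S = Ideal.span {π}) {w : S}
    (hw : π * w = 0) : w ∈ Ideal.span {socleGen π} := by
  rcases eq_or_ne w 0 with rfl | hw0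
  · exact Ideal.zero_mem _
  obtain ⟨k, u, hu, rfl⟩ := exists_eq_pow_mul_of_ne_zero hπ hw0
  have hk : π ^ k ≠ 0 := fun h ↦ hw0 (by rw [h, zero_mul])
  have hk1 : π ^ (k + 1) = 0 := by rwa [← mul_assoc, ← pow_succ', hu.mul_left_eq_zero] at hw
  rw [Ne, pow_eq_zero_iff_nilpotencyClass_le hπ] at hk
  rw [pow_eq_zero_iff_nilpotencyClass_le hπ] at hk1
  rw [socleGen, show nilpotencyClass π - 1 = k by omega]
  exact Ideal.mem_span_singleton.2 (dvd_mul_right _ _)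

theorem socleGen_mem_span_singleton (hπ : maximalIdeal S = Ideal.span {π}) {x : S}
    (hx : x ≠ 0) : socleGen π ∈ Ideal.span {x} := by
  obtain ⟨k, u, hu, rfl⟩ := exists_eq_pow_mul_of_ne_zero hπ hx
  have hk : π ^ k ≠ 0 := fun h ↦ hx (by rw [h, zero_mul])
  rw [Ne, pow_eq_zero_iff_nilpotencyClass_le hπ] at hk
  obtain ⟨j, hj⟩ : ∃ j, nilpotencyClass π - 1 = k + j := ⟨_, (Nat.add_sub_cancel' (by omega)).symm⟩
  refine Ideal.mem_span_singleton.2 ⟨↑hu.unit⁻¹ * π ^ j, ?_⟩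
  calc socleGen π = π ^ k * (u * ↑hu.unit⁻¹) * π ^ j := by simp [socleGen, hj, pow_add]
    _ = _ := by ring

theorem socleGen_mem_maximalIdeal (hπ : maximalIdeal S = Ideal.span {π}) (hS : ¬IsField S) :
    socleGen π ∈ maximalIdeal S := by
  have hπ0 : π ≠ 0 := by
    rintro rfl
    rw [Ideal.span_singleton_eq_bot.2 rfl, ← isField_iff_maximalIdeal_eq] at hπ
    exact hS hπ
  have h2 : 2 ≤ nilpotencyClass π := by
    by_contra h
    exact hπ0 (by simpa using (pow_eq_zero_iff_nilpotencyClass_le hπ (k := 1)).2 (by omega))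
  rw [hπ, socleGen, show nilpotencyClass π - 1 = (nilpotencyClass π - 2) + 1 by omega, pow_succ]
  exact Ideal.mem_span_singleton.2 (dvd_mul_left _ _)

theorem span_socleGen_le_maximalIdeal (hπ : maximalIdeal S = Ideal.span {π}) (hS : ¬IsField S) :
    Ideal.span {socleGen π} ≤ maximalIdeal S :=
  Ideal.span_le.2 (Set.singleton_subset_iff.2 (socleGen_mem_maximalIdeal hπ hS))

theorem span_socleGen_eq_top (hπ : maximalIdeal S = Ideal.span {π}) (hS : IsField S) :
    Ideal.span {socleGen π} = ⊤ := by
  refine Ideal.span_singleton_eq_top.2 (not_not.1 fun h ↦ socleGen_ne_zero hπ ?_)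
  simpa [isField_iff_maximalIdeal_eq.1 hS] using (mem_maximalIdeal _).2 h

theorem mul_eq_zero_of_mem_span_socleGen (hπ : maximalIdeal S = Ideal.span {π})
    (hS : ¬IsField S) {a b : S} (ha : a ∈ Ideal.span {socleGen π})
    (hb : b ∈ Ideal.span {socleGen π}) : a * b = 0 := by
  obtain ⟨s, rfl⟩ := Ideal.mem_span_singleton.1 ha
  obtain ⟨t, rfl⟩ := Ideal.mem_span_singleton.1 hb
  obtain ⟨r, hr⟩ := Ideal.mem_span_singleton.1 (hπ ▸ socleGen_mem_maximalIdeal hπ hS)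
  calc socleGen π * s * (socleGen π * t) = r * s * t * (π * socleGen π) := by
        nth_rw 1 [hr]; ring
    _ = 0 := by rw [mul_socleGen hπ, mul_zero]

theorem ker_toSpanSingleton_socleGen (hπ : maximalIdeal S = Ideal.span {π}) :
    LinearMap.ker (LinearMap.toSpanSingleton S S (socleGen π)) = maximalIdeal S := by
  ext x
  rw [LinearMap.mem_ker, LinearMap.toSpanSingleton_apply, smul_eq_mul]
  refine ⟨fun h ↦ (mem_maximalIdeal x).2 fun hx ↦ socleGen_ne_zero hπ ?_, fun h ↦ ?_⟩
  · rwa [hx.mul_right_eq_zero] at h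
  · obtain ⟨r, rfl⟩ := Ideal.mem_span_singleton.1 (hπ ▸ h)
    rw [mul_right_comm, mul_socleGen hπ, zero_mul]

noncomputable def residueFieldEquivSpanSocleGen (hπ : maximalIdeal S = Ideal.span {π}) :
    ResidueField S ≃ₗ[S] Ideal.span {socleGen π} :=
  (Submodule.quotEquivOfEq _ _ (ker_toSpanSingleton_socleGen hπ).symm).trans <|
    (LinearMap.quotKerEquivRange _).trans
      (LinearEquiv.ofEq _ _ (LinearMap.span_singleton_eq_range S S _).symm)

end Socle

section CharP

variable {S : Type*} [CommRing S] [IsLocalRing S] {p : ℕ}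

theorem charP_residueField (hp : p.Prime) (hpm : (p : S) ∈ maximalIdeal S) :
    CharP (ResidueField S) p := by
  rw [CharP.charP_iff_prime_eq_zero hp, ← map_natCast (residue S)]
  exact (residue_eq_zero_iff _).2 hpm

theorem dvd_ringChar_of_natCast_mem_maximalIdeal (hp : p.Prime) (hpm : (p : S) ∈ maximalIdeal S) :
    p ∣ ringChar S := by
  have := charP_residueField hp hpm
  rw [← CharP.cast_eq_zero_iff (ResidueField S) p, ← map_natCast (residue S),
    ringChar.Nat.cast_ringChar, map_zero]

/-- For odd `p`, `∑_{k < p} (1 + w) ^ k ≡ p (mod p²)` when `p ∣ w`, so the factor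
`(1 + w) ^ p - 1 = w · ∑_{k < p} (1 + w) ^ k` is `p w` times a unit. -/
theorem natCast_mul_eq_zero_of_one_add_pow_eq_one (hp : Odd p) (hpm : (p : S) ∈ maximalIdeal S)
    {w : S} (hw : (p : S) ∣ w) (h : (1 + w) ^ p = 1) : (p : S) * w = 0 := by
  obtain ⟨s, rfl⟩ := hw
  obtain ⟨t, ht⟩ := odd_sq_dvd_geom_sum₂_sub 1 s hp (R := S)
  simp only [one_pow, mul_one] at ht
  have hu : IsUnit (1 + p * t) := by
    simpa using isUnit_one_sub_self_of_mem_nonunits (-(p * t))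
      (neg_mem (Ideal.mul_mem_right t _ hpm))
  have := mul_geom_sum (1 + p * s) p
  rw [h, sub_self, add_sub_cancel_left, sub_eq_iff_eq_add.1 ht] at this
  rw [← hu.mul_left_eq_zero]
  linear_combination this

end CharP

theorem nonempty_addEquiv_fin_log_card (F : Type*) [Ring F] [Finite F] (p : ℕ) [Fact p.Prime]
    [CharP F p] : Nonempty (F ≃+ (Fin (Nat.log p (Nat.card F)) → ZMod p)) := by
  let _ : Algebra (ZMod p) F := ZMod.algebra F p
  have : Fintype F := Fintype.ofFinite F
  have hlog : Nat.log p (Nat.card F) = Module.finrank (ZMod p) F := by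
    rw [Nat.card_eq_fintype_card, Module.card_eq_pow_finrank (K := ZMod p), ZMod.card,
      Nat.log_pow (Fact.out : p.Prime).one_lt]
  exact ⟨((Module.finBasis (ZMod p) F).reindex (finCongr hlog.symm)).equivFun.toAddEquiv⟩

theorem image_val_add_eq_iff {R : Type*} [CommRing R] (K : Subgroup Rˣ) (I : Ideal R) :
    Units.val '' (K : Set Rˣ) + (I : Set R) = Units.val '' (K : Set Rˣ) ↔
      ∀ a ∈ I, 1 + a ∈ Units.val '' (K : Set Rˣ) := by
  refine ⟨fun h a ha ↦ h ▸ Set.add_mem_add ⟨1, K.one_mem, rfl⟩ ha, fun h ↦ ?_⟩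
  refine (Set.subset_add_left _ I.zero_mem).antisymm' ?_
  rintro _ ⟨_, ⟨u, hu, rfl⟩, a, ha, rfl⟩
  obtain ⟨v, hv, hva⟩ := h _ (I.mul_mem_left (↑u⁻¹) ha)
  refine ⟨u * v, K.mul_mem hu hv, ?_⟩
  rw [Units.val_mul, hva, mul_add, u.mul_inv_cancel_left, mul_one]

@[simps]
def AddMonoidHom.oneAddUnits {A R : Type*} [AddMonoid A] [CommRing R] (f : A →+ R)
    (hf : ∀ a b, f a * f b = 0) : Multiplicative A →* Rˣ where
  toFun a := ⟨1 + f a.toAdd, 1 - f a.toAdd, by linear_combination -hf a.toAdd a.toAdd, by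
    linear_combination -hf a.toAdd a.toAdd⟩
  map_one' := by ext; simp
  map_mul' a b := by
    ext; simp only [toAdd_mul, map_add, Units.val_mul]; linear_combination -hf a.toAdd b.toAdd

theorem AddMonoidHom.oneAddUnits_injective {A R : Type*} [AddMonoid A] [CommRing R] {f : A →+ R}
    (hf : ∀ a b, f a * f b = 0) (hinj : Function.Injective f) :
    Function.Injective (f.oneAddUnits hf) := fun _ _ h ↦
  Multiplicative.toAdd.injective (hinj (add_left_cancel (congrArg Units.val h)))

section Pi

variable {ι : Type*} [DecidableEq ι] {S : ι → Type*} [∀ i, CommRing (S i)]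

theorem isPureSet_image_val_iff (e : ∀ i, S i) (he0 : ∀ i, e i ≠ 0)
    (he : ∀ i (x : S i), x ≠ 0 → e i ∈ Ideal.span {x}) (K : Subgroup (∀ i, S i)ˣ) :
    IsPureSet (Units.val '' (K : Set (∀ i, S i)ˣ)) ↔
      ∀ i, ∃ c ∈ Ideal.span {e i}, 1 + Pi.single i c ∉ Units.val '' (K : Set (∀ i, S i)ˣ) := by
  simp only [IsPureSet, image_val_add_eq_iff]
  constructor
  · intro h i
    by_contra! hK
    have hbot := h (Ideal.span {Pi.single i (e i)}) fun a ha ↦ by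
      obtain ⟨t, rfl⟩ := Ideal.mem_span_singleton'.1 ha
      rw [← Pi.single_mul_right]
      exact hK _ (Ideal.mul_mem_left _ (t i) (Ideal.mem_span_singleton_self _))
    rw [Ideal.span_singleton_eq_bot, Pi.single_eq_zero_iff] at hbot
    exact he0 i hbot
  · intro h I hI
    by_contra hbot
    obtain ⟨x, hxI, hx0⟩ := Submodule.exists_mem_ne_zero_of_ne_bot hbot
    obtain ⟨i, hxi⟩ := Function.ne_iff.1 hx0
    obtain ⟨c, hc, hcK⟩ := h i
    obtain ⟨t, rfl⟩ := Ideal.mem_span_singleton'.1 (Ideal.span_singleton_le_span_singleton.2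
      (Ideal.mem_span_singleton.1 (he i _ hxi)) hc)
    exact hcK (Pi.single_mul_left (f := x) t ▸ hI _ (I.mul_mem_left _ hxI))

theorem eq_one_add_single_of_forall_ne {i : ι} {x : ∀ j, S j} (hx : ∀ j ≠ i, x j = 1) :
    x = 1 + Pi.single i (x i - 1) := by
  funext j
  rcases eq_or_ne j i with rfl | hj
  · simp
  · simp [hj, hx j hj]

theorem one_add_single_mem_of_injective {A : Type*} [AddCommGroup A] {i : ι}
    [IsLocalRing (S i)] [Finite (S i)] {p : ℕ} (hp : Odd p)
    (hπ : maximalIdeal (S i) = Ideal.span {(p : S i)}) (hA : ∀ a : A, p • a = 0)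
    (hcard : Nat.card A = Nat.card (Ideal.span {socleGen (p : S i)}))
    {K : Subgroup (∀ j, S j)ˣ} (φ : Multiplicative A →* (∀ j, S j)ˣ)
    (hφ : Function.Injective φ) (hφK : ∀ x, φ x ∈ K)
    (hφi : ∀ x, ∀ j ≠ i, (φ x : ∀ j, S j) j = 1)
    (hφm : ∀ x, (φ x : ∀ j, S j) i - 1 ∈ maximalIdeal (S i)) :
    ∀ c ∈ Ideal.span {socleGen (p : S i)}, 1 + Pi.single i c ∈ Units.val '' (K : Set _) := by
  have hpm : (p : S i) ∈ maximalIdeal (S i) := hπ ▸ Ideal.mem_span_singleton_self _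
  have hmem (a : A) : (φ (.ofAdd a) : ∀ j, S j) i - 1 ∈ Ideal.span {socleGen (p : S i)} := by
    refine mem_span_socleGen_of_mul_eq_zero hπ (natCast_mul_eq_zero_of_one_add_pow_eq_one hp hpm
      (Ideal.mem_span_singleton.1 (hπ ▸ hφm _)) ?_)
    rw [add_sub_cancel, ← Pi.pow_apply, ← Units.val_pow_eq_pow_val, ← map_pow, ← ofAdd_nsmul,
      hA, ofAdd_zero, map_one, Units.val_one, Pi.one_apply]
  let f (a : A) : Ideal.span {socleGen (p : S i)} := ⟨_, hmem a⟩
  have hf : Function.Injective f := fun a b hab ↦ by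
    refine Multiplicative.ofAdd.injective (hφ (Units.ext ?_))
    rw [eq_one_add_single_of_forall_ne (hφi (.ofAdd a)),
      eq_one_add_single_of_forall_ne (hφi (.ofAdd b))]
    exact congrArg (1 + Pi.single i ·) (congrArg Subtype.val hab)
  intro c hc
  obtain ⟨a, ha⟩ := (hf.bijective_of_nat_card_le hcard.ge).2 ⟨c, hc⟩
  refine ⟨_, hφK (.ofAdd a), ?_⟩
  rw [eq_one_add_single_of_forall_ne (hφi _)]
  exact congrArg (1 + Pi.single i ·) (congrArg Subtype.val ha)

theorem one_add_single_neg_one_notMem_image_val (i : ι) [Nontrivial (S i)]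
    (K : Subgroup (∀ j, S j)ˣ) : 1 + Pi.single i (-1) ∉ Units.val '' (K : Set (∀ j, S j)ˣ) := by
  rintro ⟨u, -, hu⟩
  have := u.isUnit.map (Pi.evalRingHom S i)
  simp [hu] at this

theorem exists_injective_of_one_add_single_mem {A : Type*} [AddCommGroup A] {i : ι}
    [IsLocalRing (S i)] [Finite (S i)] {π : S i} (hπ : maximalIdeal (S i) = Ideal.span {π})
    (hS : ¬IsField (S i)) (E : A ≃+ Ideal.span {socleGen π}) {K : Subgroup (∀ j, S j)ˣ}
    (hK : ∀ c ∈ Ideal.span {socleGen π}, 1 + Pi.single i c ∈ Units.val '' (K : Set _)) :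
    ∃ φ : Multiplicative A →* (∀ j, S j)ˣ, Function.Injective φ ∧
      ∀ x, φ x ∈ K ∧ (∀ j, j ≠ i → (φ x : ∀ j, S j) j = 1) ∧
        (φ x : ∀ j, S j) i - 1 ∈ maximalIdeal (S i) := by
  let f : A →+ ∀ j, S j :=
    (AddMonoidHom.single S i).comp ((Ideal.span {socleGen π}).subtype.toAddMonoidHom.comp E)
  have hf a b : f a * f b = 0 := by
    simp [f, ← Pi.single_mul, mul_eq_zero_of_mem_span_socleGen hπ hS (E a).2 (E b).2]
  refine ⟨f.oneAddUnits hf, AddMonoidHom.oneAddUnits_injective hf ?_, fun x ↦ ⟨?_, ?_, ?_⟩⟩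
  · exact (Pi.single_injective i).comp (Subtype.val_injective.comp E.injective)
  · obtain ⟨u, hu, hux⟩ := hK _ (E x.toAdd).2
    rwa [show f.oneAddUnits hf x = u from Units.ext (by simp [hux, f])]
  · intro j hj
    simp [f, hj]
  · simpa [f] using span_socleGen_le_maximalIdeal hπ hS (E x.toAdd).2

end Pi

theorem pure_iff_rank_lt_general {n : ℕ} (S : Fin n → Type) [instR : ∀ i, CommRing (S i)]
    [∀ i, Fintype (S i)] [∀ i, IsLocalRing (S i)]
    (p : Fin n → ℕ) (hp : ∀ i, (p i).Prime)
    (hGal : ∀ i, IsLocalRing.maximalIdeal (S i) = Ideal.span {((p i : S i))})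
    (hodd : ∀ i, Odd (ringChar (S i)))
    (K : Subgroup (∀ i, S i)ˣ) :
    IsPureSet (((↑) : (∀ i, S i)ˣ → (∀ i, S i)) '' (K : Set (∀ i, S i)ˣ)) ↔
    ∀ i, ¬ IsField (S i) →
      ¬ ∃ φ : Multiplicative
            (Fin (Nat.log (p i) (Nat.card (IsLocalRing.ResidueField (S i)))) → ZMod (p i)) →*
            (∀ j, S j)ˣ,
          Function.Injective φ ∧
          ∀ x, φ x ∈ K ∧ (∀ j, j ≠ i → ((φ x : (∀ j, S j)ˣ) : ∀ j, S j) j = 1) ∧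
            (((φ x : (∀ j, S j)ˣ) : ∀ j, S j) i - 1 ∈ IsLocalRing.maximalIdeal (S i)) := by
  rw [isPureSet_image_val_iff (fun i ↦ socleGen (p i : S i)) (fun i ↦ socleGen_ne_zero (hGal i))
    (fun i _ ↦ socleGen_mem_span_singleton (hGal i))]
  refine forall_congr' fun i ↦ ?_
  have hpm : (p i : S i) ∈ maximalIdeal (S i) := hGal i ▸ Ideal.mem_span_singleton_self _
  have : Fact (p i).Prime := ⟨hp i⟩
  have := charP_residueField (hp i) hpm
  have : Finite (ResidueField (S i)) := Finite.of_surjective _ residue_surjective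
  obtain ⟨G⟩ := nonempty_addEquiv_fin_log_card (ResidueField (S i)) (p i)
  let E := G.symm.trans (residueFieldEquivSpanSocleGen (hGal i)).toAddEquiv
  by_cases hS : IsField (S i)
  · refine iff_of_true ⟨-1, ?_, one_add_single_neg_one_notMem_image_val i K⟩ (absurd hS)
    simp [span_socleGen_eq_top (hGal i) hS]
  · have hodd' : Odd (p i) :=
      (hodd i).of_dvd_nat (dvd_ringChar_of_natCast_mem_maximalIdeal (hp i) hpm)
    simp only [hS, not_false_eq_true, forall_const]
    rw [iff_not_comm]
    simp only [not_exists, not_and, not_not]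
    refine ⟨fun ⟨φ, hφ, hφK⟩ ↦ one_add_single_mem_of_injective hodd' (hGal i) (fun v ↦ ?_)
      (Nat.card_congr E.toEquiv) φ hφ (hφK · |>.1) (hφK · |>.2.1) (hφK · |>.2.2),
      exists_injective_of_one_add_single_mem (hGal i) hS E⟩
    ext; simp

/-- Purity criterion: over a CG-ring `R = ∏ S i` of odd characteristic (each `S i` a
Galois ring for the prime `p i`), a subgroup `K ≤ R^×` is pure iff for each `i` with
`S i` not a field, the rank of `K ∩ U_{p i}` is less than `r_{p i}`, the residue
degree; equivalently, `K ∩ U_{p i}` contains no copy of `(ℤ/p i)^{r_{p i}}`. -/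
theorem pure_iff_rank_lt {n : ℕ} (S : Fin n → Type) [instR : ∀ i, CommRing (S i)]
    [∀ i, Fintype (S i)] [∀ i, IsLocalRing (S i)]
    (p : Fin n → ℕ) (hp : ∀ i, (p i).Prime)
    (hGal : ∀ i, IsLocalRing.maximalIdeal (S i) = Ideal.span {((p i : S i))})
    (hco : ∀ i j : Fin n, i ≠ j → p i ≠ p j)
    (hodd : ∀ i, Odd (ringChar (S i)))
    (K : Subgroup (∀ i, S i)ˣ) :
    IsPureSet (((↑) : (∀ i, S i)ˣ → (∀ i, S i)) '' (K : Set (∀ i, S i)ˣ)) ↔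
    ∀ i, ¬ IsField (S i) →
      ¬ ∃ φ : Multiplicative
            (Fin (Nat.log (p i) (Nat.card (IsLocalRing.ResidueField (S i)))) → ZMod (p i)) →*
            (∀ j, S j)ˣ,
          Function.Injective φ ∧
          ∀ x, φ x ∈ K ∧ (∀ j, j ≠ i → ((φ x : (∀ j, S j)ˣ) : ∀ j, S j) j = 1) ∧
            (((φ x : (∀ j, S j)ˣ) : ∀ j, S j) i - 1 ∈ IsLocalRing.maximalIdeal (S i)) :=
  pure_iff_rank_lt_general S (instR := instR) p hp hGal hodd K
end

section
/- Let R be a CG-ring, K ≤ R^×, and let A = cyc(K, R) be the cyclotomic S-ring whose basic sets are the K-orbits on R. Then the S-ring dual to A equals cyc(K̂, R̂), where R̂ is the ring dual to R with respect to a generating character χ and K̂ is the image of K under the ring isomorphism r ↦ χ^{(r)} from R to R̂. -/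
open Pointwise

/-- The partition of the additive character group dual to a family of subsets of `R`:
characters are equivalent iff they have equal sums over every member of the family. -/
noncomputable def addDualParts {R : Type*} [AddCommGroup R] (parts : Set (Set R)) :
    Set (Set (AddChar R ℂ)) :=
  Set.range (fun ψ₀ : AddChar R ℂ =>
    {ψ : AddChar R ℂ | ∀ S ∈ parts, (∑ᶠ s ∈ S, ψ s) = ∑ᶠ s ∈ S, ψ₀ s})


/-! Every character is `χ^{(r)}` for a unique `r`. The stabiliser of `x` in `K` does not depend on
the character, so two characters have equal sums over every orbit `Kx` iff
`x ↦ ∑_{k ∈ K} χ(r k x)` and `x ↦ ∑_{k ∈ K} χ(r' k x)` coincide. Fourier inversion recovers from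
such a function the multiplicity of each `t` in the family `(r k)_{k ∈ K}`; since `r'` occurs in
`(r' k)_k`, it occurs in `(r k)_k`, i.e. `r' ∈ K r`. -/

open Finset

namespace MulAction

variable {G α : Type*} [Group G] [Fintype G] [MulAction G α]

theorem card_filter_smul_eq_of_mem_orbit [DecidableEq α] {b y : α} (hy : y ∈ orbit G b) :
    #{g : G | g • b = y} = Nat.card (stabilizer G b) := by
  obtain ⟨h, rfl⟩ := hy
  rw [← Fintype.card_subtype, ← Nat.card_eq_fintype_card]
  exact Nat.card_congr <| (Equiv.mulLeft h⁻¹).subtypeEquiv fun g => by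
    simp [mem_stabilizer_iff, mul_smul, inv_smul_eq_iff]

theorem sum_smul_eq_card_stabilizer_nsmul_finsum_orbit {M : Type*} [AddCommMonoid M]
    (f : α → M) (b : α) :
    ∑ g : G, f (g • b) = Nat.card (stabilizer G b) • ∑ᶠ y ∈ orbit G b, f y := by
  classical
  have hfin : (orbit G b).Finite := Set.finite_range _
  have himage : (univ.image fun g : G => g • b) = hfin.toFinset := by
    ext y; simp [mem_orbit_iff]
  rw [Finset.sum_comp, himage, finsum_mem_eq_finite_toFinset_sum _ hfin, smul_sum]
  refine sum_congr rfl fun y hy => ?_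
  rw [card_filter_smul_eq_of_mem_orbit ((Set.Finite.mem_toFinset _).1 hy)]

theorem finsum_orbit_eq_iff_sum_smul_eq {M : Type*} [AddCommMonoid M] [IsAddTorsionFree M]
    (f f' : α → M) (b : α) :
    ∑ᶠ y ∈ orbit G b, f y = ∑ᶠ y ∈ orbit G b, f' y ↔
      ∑ g : G, f (g • b) = ∑ g : G, f' (g • b) := by
  simp only [sum_smul_eq_card_stabilizer_nsmul_finsum_orbit]
  exact (IsAddTorsionFree.nsmul_right_injective Nat.card_pos.ne').eq_iff.symm

theorem orbit_subgroup_units_eq_setOf {R : Type*} [Monoid R] (K : Subgroup Rˣ) (x : R) :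
    orbit K x = {y : R | ∃ k ∈ K, ((k : Rˣ) : R) * x = y} := by
  ext y
  simp [mem_orbit_iff, Subgroup.smul_def, Units.smul_def]

end MulAction

namespace AddChar

open MulAction

variable {R R' : Type*} [CommRing R] [CommRing R'] {χ : AddChar R R'}

theorem isPrimitive_of_injective_mulShift (hχ : Function.Injective fun r : R => χ.mulShift r) :
    χ.IsPrimitive :=
  fun _ ha h => ha (hχ (h.trans (mulShift_zero χ).symm))

variable [Fintype R] [IsDomain R']

theorem sum_mul_sum_eq_card_filter_mul_card (hχ : χ.IsPrimitive) {ι : Type*} [Fintype ι]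
    [DecidableEq R] (c : ι → R) (t : R) :
    ∑ x : R, χ (-(t * x)) * ∑ i, χ (c i * x) = #{i | c i = t} * Fintype.card R := by
  calc ∑ x : R, χ (-(t * x)) * ∑ i, χ (c i * x)
      = ∑ i, ∑ x : R, χ (x * (c i - t)) := by
        rw [sum_comm]
        refine sum_congr rfl fun x _ => ?_
        rw [mul_sum]
        refine sum_congr rfl fun i _ => ?_
        rw [← map_add_eq_mul]
        congr 1
        ring
    _ = ∑ i, if c i = t then (Fintype.card R : R') else 0 := by
        simp only [sum_mulShift _ hχ, sub_eq_zero, Nat.cast_ite, Nat.cast_zero]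
    _ = _ := by rw [sum_ite, sum_const_zero, add_zero, sum_const, nsmul_eq_mul]

variable [CharZero R']

theorem card_filter_eq_of_forall_sum_eq (hχ : χ.IsPrimitive) {ι ι' : Type*} [Fintype ι]
    [Fintype ι'] [DecidableEq R] {c : ι → R} {c' : ι' → R}
    (h : ∀ x, ∑ i, χ (c i * x) = ∑ i, χ (c' i * x)) (t : R) :
    #{i | c i = t} = #{i | c' i = t} := by
  have hcard : (Fintype.card R : R') ≠ 0 := Nat.cast_ne_zero.2 Fintype.card_ne_zero
  have hsum := sum_mul_sum_eq_card_filter_mul_card hχ c t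
  simp only [h, sum_mul_sum_eq_card_filter_mul_card hχ c' t] at hsum
  exact_mod_cast (mul_right_cancel₀ hcard hsum).symm

theorem forall_sum_mulShift_smul_eq_iff_mem_orbit (hχ : χ.IsPrimitive)
    (K : Subgroup Rˣ) [Fintype K] (r r' : R) :
    (∀ x : R, ∑ k : K, χ.mulShift r' (k • x) = ∑ k : K, χ.mulShift r (k • x)) ↔
      r' ∈ orbit K r := by
  classical
  constructor
  · intro h
    have hcard := card_filter_eq_of_forall_sum_eq hχ (c := fun k : K => r' * ((k : Rˣ) : R))
      (c' := fun k : K => r * ((k : Rˣ) : R))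
      (fun x => by simpa [Subgroup.smul_def, Units.smul_def, mul_assoc] using h x) r'
    have hpos : 0 < #{k : K | r * ((k : Rˣ) : R) = r'} := hcard ▸ card_pos.2 ⟨1, by simp⟩
    obtain ⟨k, hk⟩ := card_pos.1 hpos
    exact ⟨k, by simpa [Subgroup.smul_def, Units.smul_def, mul_comm] using (mem_filter.1 hk).2⟩
  · rintro ⟨k₀, rfl⟩ x
    refine Fintype.sum_equiv (Equiv.mulLeft k₀) _ _ fun k => ?_
    simp only [mulShift_apply, Equiv.coe_mulLeft, Subgroup.smul_def, Units.smul_def,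
      Subgroup.coe_mul, Units.val_mul, smul_eq_mul]
    ring_nf

theorem forall_finsum_orbit_mulShift_eq_iff_mem_orbit
    (hχ : χ.IsPrimitive) (K : Subgroup Rˣ) (r r' : R) :
    (∀ x : R, ∑ᶠ y ∈ orbit K x, χ.mulShift r' y = ∑ᶠ y ∈ orbit K x, χ.mulShift r y) ↔
      r' ∈ orbit K r := by
  have : Fintype K := Fintype.ofFinite K
  simp only [finsum_orbit_eq_iff_sum_smul_eq]
  exact forall_sum_mulShift_smul_eq_iff_mem_orbit hχ K r r'

theorem setOf_forall_finsum_eq_mulShift_eq_image_orbit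
    (hχ : Function.Bijective fun r : R => χ.mulShift r) (K : Subgroup Rˣ) (r : R) :
    {ψ : AddChar R R' | ∀ S ∈ Set.range (orbit K), ∑ᶠ s ∈ S, ψ s = ∑ᶠ s ∈ S, χ.mulShift r s} =
      (fun r : R => χ.mulShift r) '' orbit K r := by
  ext ψ
  obtain ⟨r', rfl⟩ := hχ.2 ψ
  rw [Set.mem_ofPred_eq, Set.forall_mem_range, hχ.1.mem_set_image]
  exact forall_finsum_orbit_mulShift_eq_iff_mem_orbit
    (isPrimitive_of_injective_mulShift hχ.1) K r r'

end AddChar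

theorem dual_of_cyclotomic_general {R : Type*} [CommRing R] [Fintype R]
    (K : Subgroup Rˣ)
    (χ₀ : AddChar R ℂ) (hχ₀ : Function.Bijective (fun r : R => χ₀.mulShift r)) :
    addDualParts (Set.range (fun x : R => {y : R | ∃ k ∈ K, ((k : Rˣ) : R) * x = y})) =
      (fun X : Set R => (fun r : R => χ₀.mulShift r) '' X) ''
        (Set.range (fun x : R => {y : R | ∃ k ∈ K, ((k : Rˣ) : R) * x = y})) := by
  simp only [← MulAction.orbit_subgroup_units_eq_setOf]
  ext X
  constructor
  · rintro ⟨ψ₀, rfl⟩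
    obtain ⟨r, rfl⟩ := hχ₀.2 ψ₀
    exact ⟨_, ⟨r, rfl⟩, (AddChar.setOf_forall_finsum_eq_mulShift_eq_image_orbit hχ₀ K r).symm⟩
  · rintro ⟨_, ⟨r, rfl⟩, rfl⟩
    exact ⟨χ₀.mulShift r, AddChar.setOf_forall_finsum_eq_mulShift_eq_image_orbit hχ₀ K r⟩

/-- The dual of the cyclotomic S-ring `cyc(K,R)` is `cyc(K̂,R̂)`: identifying the dual
ring `R̂` with `R` via a generating character `χ₀` (so that `r ↦ χ₀^{(r)} = mulShift χ₀ r`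
is a bijection), the basic sets of the dual S-ring are the images of the `K`-orbits. -/
theorem dual_of_cyclotomic {R : Type*} [CommRing R] [Fintype R]
    (hCG : IsCGRing R) (K : Subgroup Rˣ)
    (χ₀ : AddChar R ℂ) (hχ₀ : Function.Bijective (fun r : R => χ₀.mulShift r)) :
    addDualParts (Set.range (fun x : R => {y : R | ∃ k ∈ K, ((k : Rˣ) : R) * x = y})) =
      (fun X : Set R => (fun r : R => χ₀.mulShift r) '' X) ''
        (Set.range (fun x : R => {y : R | ∃ k ∈ K, ((k : Rˣ) : R) * x = y})) :=
  dual_of_cyclotomic_general K χ₀ hχ₀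
end

section
/- Let G be a finite abelian group with socle G_0, and let ξ be a nonzero element of I_K(G) = Σ_p I_p ⊗ K G_{p'} (where I_p is the ideal of KG_p generated by ξ(G_{0,p})). Then there exists a nonempty set Q of primes dividing |G| and a coset A of G_{0,Q} in G such that for every p ∈ Q, the p-projection of the support of ξ ∘ ξ(A) equals the p-projection A_p of A. -/
/-!
Write `ξ = ∑_{q ∈ Q} η_q` with `η_q` invariant under the `q`-torsion `G[q]`, and fix `a` with
`ξ(a) ≠ 0`. If `Q` fails for the coset `a G[∏ Q]`, then for some `p ∈ Q` and `g` in that coset,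
`ξ` vanishes on `g G[m]`, `m = ∏ (Q \ {p})`. Splitting `g = a t s` with `t ∈ G[p]`, `s ∈ G[m]`,
right translation by `t` maps `a G[m]` into `g G[m]`, so on `a G[m]` we get
`ξ = ξ - ξ(· t) = ∑_{q ≠ p} (η_q - η_q(· t))`, the `p`-summand cancelling by invariance. Thus
`Q \ {p}` inherits the hypothesis, and the induction on `Q` stops because `ξ(a) ≠ 0` rules out
`Q = ∅`.
-/

open Finset

section TorsionCoset

variable {G : Type*} [CommGroup G]

def torsionCoset (a : G) (n : ℕ) : Set G := {x | ∃ h : G, h ^ n = 1 ∧ x = a * h}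

lemma mem_torsionCoset {a x : G} {n : ℕ} : x ∈ torsionCoset a n ↔ (x * a⁻¹) ^ n = 1 :=
  ⟨by rintro ⟨h, hh, rfl⟩; rwa [mul_inv_cancel_comm],
    fun hx => ⟨x * a⁻¹, hx, (mul_inv_cancel_comm_assoc a x).symm⟩⟩

lemma self_mem_torsionCoset (a : G) (n : ℕ) : a ∈ torsionCoset a n :=
  ⟨1, one_pow n, (mul_one a).symm⟩

lemma mul_mem_torsionCoset {a x h : G} {n : ℕ} (hx : x ∈ torsionCoset a n) (hh : h ^ n = 1) :
    x * h ∈ torsionCoset a n := by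
  obtain ⟨k, hk, rfl⟩ := hx
  exact ⟨k * h, by rw [mul_pow, hk, hh, one_mul], mul_assoc a k h⟩

lemma torsionCoset_subset_of_dvd (a : G) {m n : ℕ} (hmn : m ∣ n) :
    torsionCoset a m ⊆ torsionCoset a n := by
  rintro x ⟨h, hh, rfl⟩
  exact ⟨h, orderOf_dvd_iff_pow_eq_one.1 ((orderOf_dvd_of_pow_eq_one hh).trans hmn), rfl⟩

lemma torsionCoset_subset_of_mem {a g : G} {n : ℕ} (hg : g ∈ torsionCoset a n) :
    torsionCoset g n ⊆ torsionCoset a n := by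
  rintro x ⟨h, hh, rfl⟩
  exact mul_mem_torsionCoset hg hh

lemma exists_mul_eq_of_pow_mul_eq_one {p m : ℕ} (hpm : p.Coprime m) {x : G}
    (hx : x ^ (p * m) = 1) : ∃ t s : G, t ^ p = 1 ∧ s ^ m = 1 ∧ t * s = x := by
  set A := Nat.gcdA p m
  set B := Nat.gcdB p m
  have hbezout : (p : ℤ) * A + m * B = 1 := by
    have := Nat.gcd_eq_gcd_ab p m
    rwa [hpm, Nat.cast_one, eq_comm] at this
  have hx' : x ^ ((p * m : ℕ) : ℤ) = 1 := by rw [zpow_natCast, hx]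
  refine ⟨x ^ (m * B), x ^ (p * A), ?_, ?_, ?_⟩
  · rw [← zpow_natCast, ← zpow_mul, show (m * B : ℤ) * p = (p * m : ℕ) * B by push_cast; ring,
      zpow_mul, hx', one_zpow]
  · rw [← zpow_natCast, ← zpow_mul, show (p * A : ℤ) * m = (p * m : ℕ) * A by push_cast; ring,
      zpow_mul, hx', one_zpow]
  · rw [← zpow_add, add_comm, hbezout, zpow_one]

lemma exists_pow_eq_one_forall_mul_mem_torsionCoset {p m : ℕ} (hpm : p.Coprime m) {a g : G}
    (hg : g ∈ torsionCoset a (p * m)) :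
    ∃ t : G, t ^ p = 1 ∧ ∀ x ∈ torsionCoset a m, x * t ∈ torsionCoset g m := by
  obtain ⟨h, hh, rfl⟩ := hg
  obtain ⟨t, s, ht, hs, rfl⟩ := exists_mul_eq_of_pow_mul_eq_one hpm hh
  refine ⟨t, ht, ?_⟩
  rintro _ ⟨k, hk, rfl⟩
  refine ⟨s⁻¹ * k, by rw [mul_pow, inv_pow, hs, hk, inv_one, one_mul], ?_⟩
  rw [← mul_assoc (a * (t * s)), ← mul_assoc a t s, mul_inv_cancel_right, mul_right_comm]

end TorsionCoset

lemma coprime_prod_erase_of_prime {Q : Finset ℕ} (hQ : ∀ q ∈ Q, q.Prime) {p : ℕ} (hp : p ∈ Q) :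
    p.Coprime (∏ q ∈ Q.erase p, q) :=
  Nat.Coprime.prod_right fun q hq =>
    (Nat.coprime_primes (hQ p hp) (hQ q (mem_of_mem_erase hq))).2 (ne_of_mem_erase hq).symm

section Decomposition

variable {G : Type*} [CommGroup G] {M : Type*} [AddCommGroup M]

/-- `f` agrees on the coset `a G[∏ Q]` with a sum of functions `η q`, each invariant under
`q`-torsion: the shape of an element of `I_K(G)`. -/
def HasTorsionInvariantDecomposition (f : G → M) (Q : Finset ℕ) (a : G) : Prop :=
  ∃ η : ℕ → G → M, (∀ q ∈ Q, ∀ x h : G, h ^ q = 1 → η q (x * h) = η q x) ∧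
    ∀ x ∈ torsionCoset a (∏ q ∈ Q, q), f x = ∑ q ∈ Q, η q x

/-- For `g` in the coset, the `x` with `orderOf (x * g⁻¹)` prime to `p` are those with the same
`p`-projection as `g`. -/
def HasFullProjections (f : G → M) (Q : Finset ℕ) (a : G) : Prop :=
  ∀ p ∈ Q, ∀ g ∈ torsionCoset a (∏ q ∈ Q, q), ∃ x ∈ torsionCoset a (∏ q ∈ Q, q),
    f x ≠ 0 ∧ (orderOf (x * g⁻¹)).Coprime p

variable {f : G → M} {Q : Finset ℕ} {a : G}

lemma HasTorsionInvariantDecomposition.nonempty (hf : HasTorsionInvariantDecomposition f Q a)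
    (ha : f a ≠ 0) : Q.Nonempty := by
  obtain ⟨η, -, hsum⟩ := hf
  refine nonempty_iff_ne_empty.2 fun hQ => ha ?_
  rw [hsum a (self_mem_torsionCoset a _), hQ, sum_empty]

lemma HasTorsionInvariantDecomposition.erase (hf : HasTorsionInvariantDecomposition f Q a)
    {p : ℕ} (hp : p ∈ Q) {t : G} (ht : t ^ p = 1)
    (hvanish : ∀ x ∈ torsionCoset a (∏ q ∈ Q.erase p, q), f (x * t) = 0) :
    HasTorsionInvariantDecomposition f (Q.erase p) a := by
  obtain ⟨η, hinv, hsum⟩ := hf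
  refine ⟨fun q x => η q x - η q (x * t), fun q hq x h hh => ?_, fun x hx => ?_⟩
  · dsimp only
    have hq' := mem_of_mem_erase hq
    rw [mul_right_comm x h t, hinv q hq' x h hh, hinv q hq' (x * t) h hh]
  · have hdvd : ∏ q ∈ Q.erase p, q ∣ ∏ q ∈ Q, q := prod_dvd_prod_of_subset _ _ _ (erase_subset p Q)
    have hxQ := torsionCoset_subset_of_dvd a hdvd hx
    have hxtQ : x * t ∈ torsionCoset a (∏ q ∈ Q, q) :=
      mul_mem_torsionCoset hxQ (orderOf_dvd_iff_pow_eq_one.1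
        ((orderOf_dvd_of_pow_eq_one ht).trans (dvd_prod_of_mem _ hp)))
    calc f x = f x - f (x * t) := by rw [hvanish x hx, sub_zero]
      _ = ∑ q ∈ Q, (η q x - η q (x * t)) := by rw [hsum x hxQ, hsum _ hxtQ, sum_sub_distrib]
      _ = ∑ q ∈ Q.erase p, (η q x - η q (x * t)) := by
        rw [← add_sum_erase Q _ hp, hinv p hp x t ht, sub_self, zero_add]

lemma exists_forall_eq_zero_of_not_hasFullProjections (hQ : ∀ q ∈ Q, q.Prime)
    (hf : ¬ HasFullProjections f Q a) : ∃ p ∈ Q, ∃ g ∈ torsionCoset a (∏ q ∈ Q, q),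
      ∀ y ∈ torsionCoset g (∏ q ∈ Q.erase p, q), f y = 0 := by
  unfold HasFullProjections at hf
  push Not at hf
  obtain ⟨p, hp, g, hg, hnot⟩ := hf
  refine ⟨p, hp, g, hg, fun y hy => not_not.1 fun hy0 => hnot y ?_ hy0 ?_⟩
  · exact torsionCoset_subset_of_mem hg
      (torsionCoset_subset_of_dvd g (prod_dvd_prod_of_subset _ _ _ (erase_subset p Q)) hy)
  · exact (coprime_prod_erase_of_prime hQ hp).symm.coprime_dvd_left
      (orderOf_dvd_of_pow_eq_one (mem_torsionCoset.1 hy))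

theorem exists_subset_hasFullProjections (hQ : ∀ q ∈ Q, q.Prime) (ha : f a ≠ 0)
    (hf : HasTorsionInvariantDecomposition f Q a) :
    ∃ Q' ⊆ Q, Q'.Nonempty ∧ HasFullProjections f Q' a := by
  induction Q using Finset.strongInduction with
  | H Q ih =>
  by_cases hfull : HasFullProjections f Q a
  · exact ⟨Q, subset_refl Q, hf.nonempty ha, hfull⟩
  obtain ⟨p, hp, g, hg, hvanish⟩ := exists_forall_eq_zero_of_not_hasFullProjections hQ hfull
  rw [← mul_prod_erase Q (fun q => q) hp] at hg
  obtain ⟨t, ht, hshift⟩ :=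
    exists_pow_eq_one_forall_mul_mem_torsionCoset (coprime_prod_erase_of_prime hQ hp) hg
  obtain ⟨Q', hQ', hne, hfull'⟩ := ih (Q.erase p) (erase_ssubset hp)
    (fun q hq => hQ q (mem_of_mem_erase hq)) (hf.erase hp ht fun x hx => hvanish _ (hshift x hx))
  exact ⟨Q', hQ'.trans (erase_subset p Q), hne, hfull'⟩

end Decomposition

section MonoidAlgebra

variable {G : Type*} [CommGroup G] [Fintype G] [DecidableEq G] {K : Type*} [Ring K]

lemma coeff_sum_single_mul_pow_eq_one (g : G) (q : ℕ) (x : G) :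
    (∑ h ∈ univ.filter (fun h : G => h ^ q = 1), MonoidAlgebra.single (g * h) (1 : K)).coeff x =
      if (g⁻¹ * x) ^ q = 1 then 1 else 0 := by
  simp only [MonoidAlgebra.coeff_sum, Finsupp.finsetSum_apply, MonoidAlgebra.coeff_single,
    Finsupp.single_apply, ← eq_inv_mul_iff_mul_eq, sum_ite_eq', mem_filter, mem_univ, true_and]

lemma hasTorsionInvariantDecomposition_of_mem_span {ξ : MonoidAlgebra K G}
    (hξ : ξ ∈ Submodule.span K
      {η : MonoidAlgebra K G | ∃ (g : G) (p : ℕ), p.Prime ∧ p ∣ Fintype.card G ∧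
        η = ∑ h ∈ univ.filter (fun h : G => h ^ p = 1), MonoidAlgebra.single (g * h) (1 : K)})
    (a : G) : HasTorsionInvariantDecomposition ξ.coeff (Fintype.card G).primeFactors a := by
  induction hξ using Submodule.span_induction with
  | mem _ hη =>
    obtain ⟨g, p, hp, hpG, rfl⟩ := hη
    refine ⟨fun q => if q = p then ⇑(∑ h ∈ univ.filter (fun h : G => h ^ p = 1),
      MonoidAlgebra.single (g * h) (1 : K)).coeff else 0, fun q _ x h hh => ?_, fun x _ => ?_⟩
    · dsimp only
      split_ifs with hqp
      · subst hqp
        rw [coeff_sum_single_mul_pow_eq_one, coeff_sum_single_mul_pow_eq_one, ← mul_assoc, mul_pow,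
          hh, mul_one]
      · rfl
    · have hpP : p ∈ (Fintype.card G).primeFactors :=
        Nat.mem_primeFactors.2 ⟨hp, hpG, Fintype.card_ne_zero⟩
      simp only [ite_apply, Pi.zero_apply, sum_ite_eq', hpP, if_true]
  | zero => exact ⟨0, fun _ _ _ _ _ => rfl, fun _ _ => by simp⟩
  | add _ _ _ _ hξ hζ =>
    obtain ⟨η, hηinv, hηsum⟩ := hξ
    obtain ⟨θ, hθinv, hθsum⟩ := hζ
    refine ⟨η + θ, fun q hq x h hh => ?_, fun x hx => ?_⟩
    · simp only [Pi.add_apply, hηinv q hq x h hh, hθinv q hq x h hh]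
    · simp only [MonoidAlgebra.coeff_add, Finsupp.add_apply, hηsum x hx, hθsum x hx,
        Pi.add_apply, sum_add_distrib]
  | smul c _ _ hξ =>
    obtain ⟨η, hηinv, hηsum⟩ := hξ
    refine ⟨c • η, fun q hq x h hh => ?_, fun x hx => ?_⟩
    · simp only [Pi.smul_apply, hηinv q hq x h hh]
    · simp only [MonoidAlgebra.coeff_smul, Finsupp.smul_apply, hηsum x hx, Pi.smul_apply,
        smul_sum]

end MonoidAlgebra

/-- If `ξ` is a nonzero element of the ideal `I_K(G)` (spanned by the sums over
cosets of the elementary abelian subgroups `G_{0,p}`), then there is a nonempty set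
`Q` of primes dividing `|G|` and a coset `A` of `G_{0,Q}` such that for each `p ∈ Q`
the `p`-projection of the support of the restriction of `ξ` to `A` is all of `A_p`:
every `g ∈ A` agrees in its `p`-part with some element of the support inside `A`. -/
theorem exists_coset_support_full_p_projection
    {G : Type*} [CommGroup G] [Fintype G] [DecidableEq G]
    {K : Type*} [Field K]
    (ξ : MonoidAlgebra K G) (hξ0 : ξ ≠ 0)
    (hξ : ξ ∈ Submodule.span K
      {η : MonoidAlgebra K G | ∃ (g : G) (p : ℕ), p.Prime ∧ p ∣ Fintype.card G ∧
        η = ∑ h ∈ Finset.univ.filter (fun h : G => h ^ p = 1),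
              MonoidAlgebra.single (g * h) (1 : K)}) :
    ∃ Q : Finset ℕ, Q.Nonempty ∧ (∀ p ∈ Q, p.Prime ∧ p ∣ Fintype.card G) ∧
      ∃ a : G, ∀ p ∈ Q, ∀ g ∈ {x : G | ∃ h : G, h ^ (∏ q ∈ Q, q) = 1 ∧ x = a * h},
        ∃ x ∈ {x : G | ∃ h : G, h ^ (∏ q ∈ Q, q) = 1 ∧ x = a * h},
          ξ.coeff x ≠ 0 ∧ Nat.Coprime (orderOf (x * g⁻¹)) p := by
  obtain ⟨a, ha⟩ := Finsupp.ne_iff.1 (mt MonoidAlgebra.coeff_eq_zero.1 hξ0)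
  obtain ⟨Q, hQP, hQ, hfull⟩ := exists_subset_hasFullProjections
    (fun _ hp => Nat.prime_of_mem_primeFactors hp) ha
    (hasTorsionInvariantDecomposition_of_mem_span hξ a)
  exact ⟨Q, hQ, fun p hp => ⟨Nat.prime_of_mem_primeFactors (hQP hp),
    Nat.dvd_of_mem_primeFactors (hQP hp)⟩, a, hfull⟩
end

section
/- Let R be a CG-ring, L ≤ R^× a subgroup, and T a pure L-orbit on R. Let S and S' be distinct subsets of T with S nonempty. Then there exists a unit character χ ∈ R̂^× (i.e., a character of R^+ of the form x ↦ χ_0(rx) with r ∈ R^× and χ_0 a fixed generating character) such that Σ_{s∈S} χ(s) ≠ Σ_{s∈S'} χ(s). -/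
open Pointwise

/-!
If all unit characters agree on `S` and `S'`, the Fourier transform of `f = 1_S - 1_S'` vanishes
on `Rˣ`. In a CG-ring every nonunit annihilates one of the minimal ideals `σᵢR` (one per Galois
factor), so for `aᵢ ∈ σᵢR` the product `∏ᵢ (1 - χ(-w aᵢ))` kills the transform at every nonunit
`w`; expanding it and inverting gives `∑_B (-1)^|B| f(x + ∑_{i∈B} aᵢ) = 0`. Purity of the orbit
`T`, together with the distinct residue characteristics `pᵢ`, lets one choose the `aᵢ` so that
`x + ∑_{i∈B} aᵢ ∉ T` for every nonempty `B`; as `f` vanishes off `T`, this forces `f(x) = 0`.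
-/

open Finset MulAction

namespace AddChar

variable {A M : Type*} [AddCommMonoid A] [CommMonoid M]

theorem map_sum_eq_prod {ι : Type*} (ψ : AddChar A M) (s : Finset ι) (f : ι → A) :
    ψ (∑ i ∈ s, f i) = ∏ i ∈ s, ψ (f i) := by
  classical
  induction s using Finset.induction_on with
  | empty => simp
  | insert i s hi ih => rw [sum_insert hi, prod_insert hi, map_add_eq_mul, ih]

theorem isPrimitive_of_injective_mulShift_s16 {R : Type*} [CommRing R] {ψ : AddChar R M}
    (hψ : Function.Injective ψ.mulShift) : ψ.IsPrimitive :=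
  fun _ ha h => ha (hψ (h.trans ψ.mulShift_zero.symm))

variable {R K : Type*} [CommRing R] [Fintype R] [CommRing K]

def transform (ψ : AddChar R K) (f : R → K) (w : R) : K :=
  ∑ y, f y * ψ (w * y)

variable [IsDomain K]

theorem sum_neg_mul_mul_transform {ψ : AddChar R K} (hψ : ψ.IsPrimitive) (f : R → K) (z : R) :
    ∑ w, ψ (-(w * z)) * ψ.transform f w = Fintype.card R * f z := by
  classical
  calc ∑ w, ψ (-(w * z)) * ψ.transform f w = ∑ y, f y * ∑ w, ψ (w * (y - z)) := by
        simp_rw [transform, mul_sum]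
        rw [sum_comm]
        refine sum_congr rfl fun y _ => sum_congr rfl fun w _ => ?_
        rw [mul_sub, sub_eq_neg_add, map_add_eq_mul]
        ring
    _ = Fintype.card R * f z := by
        simp only [fun y => sum_mulShift (y - z) hψ, sub_eq_zero, Nat.cast_ite, Nat.cast_zero,
          mul_ite, mul_zero, sum_ite_eq', mem_univ, if_true, mul_comm]

theorem sum_powerset_neg_one_pow_mul_eq_zero [CharZero K] {ψ : AddChar R K}
    (hψ : ψ.IsPrimitive) {f : R → K} (hf : ∀ u : Rˣ, ψ.transform f u = 0)
    {ι : Type*} [Fintype ι] [DecidableEq ι] {a : ι → R}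
    (ha : ∀ w, ¬IsUnit w → ∃ i, w * a i = 0) (x : R) :
    ∑ B ∈ univ.powerset, (-1) ^ #B * f (x + ∑ i ∈ B, a i) = 0 := by
  have hvanish : ∀ w, (∏ i, (1 - ψ (-(w * a i)))) * ψ.transform f w = 0 := by
    intro w
    by_cases hw : IsUnit w
    · obtain ⟨u, rfl⟩ := hw
      rw [hf, mul_zero]
    · obtain ⟨i, hi⟩ := ha w hw
      rw [prod_eq_zero (mem_univ i) (by simp [hi]), zero_mul]
  have hexpand : ∀ w, (∏ i, (1 - ψ (-(w * a i)))) * ψ (-(w * x)) =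
      ∑ B ∈ univ.powerset, (-1) ^ #B * ψ (-(w * (x + ∑ i ∈ B, a i))) := by
    intro w
    rw [prod_sub, sum_mul]
    refine sum_congr rfl fun B _ => ?_
    rw [prod_const_one, mul_one, ← map_sum_eq_prod, sum_neg_distrib, ← mul_sum, mul_add,
      neg_add, map_add_eq_mul]
    ring
  have hcard : (Fintype.card R : K) ≠ 0 := Nat.cast_ne_zero.2 Fintype.card_ne_zero
  refine (mul_eq_zero.1 ?_).resolve_left hcard
  calc (Fintype.card R : K) * ∑ B ∈ univ.powerset, (-1) ^ #B * f (x + ∑ i ∈ B, a i)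
      = ∑ B ∈ univ.powerset,
          (-1) ^ #B * ∑ w, ψ (-(w * (x + ∑ i ∈ B, a i))) * ψ.transform f w := by
        simp_rw [sum_neg_mul_mul_transform hψ, mul_sum]
        exact sum_congr rfl fun _ _ => by ring
    _ = ∑ w, (∏ i, (1 - ψ (-(w * a i)))) * ψ (-(w * x)) * ψ.transform f w := by
        simp_rw [hexpand, sum_mul, mul_sum]
        rw [sum_comm]
        exact sum_congr rfl fun _ _ => sum_congr rfl fun _ _ => by ring
    _ = 0 := sum_eq_zero fun w _ => by rw [mul_right_comm, hvanish, zero_mul]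

theorem apply_eq_zero_of_forall_add_sum_eq_zero [CharZero K] {ψ : AddChar R K}
    (hψ : ψ.IsPrimitive) {f : R → K} (hf : ∀ u : Rˣ, ψ.transform f u = 0)
    {ι : Type*} [Fintype ι] [DecidableEq ι] {a : ι → R}
    (ha : ∀ w, ¬IsUnit w → ∃ i, w * a i = 0) {x : R}
    (hx : ∀ B : Finset ι, B.Nonempty → f (x + ∑ i ∈ B, a i) = 0) : f x = 0 := by
  have h := sum_powerset_neg_one_pow_mul_eq_zero hψ hf ha x
  rwa [sum_eq_single_of_mem ∅ (empty_mem_powerset _) fun B _ hB => by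
    rw [hx B (nonempty_iff_ne_empty.2 hB), mul_zero], card_empty, pow_zero, one_mul,
    sum_empty, add_zero] at h

end AddChar

theorem Ideal.isAtom_span_singleton_iff {R : Type*} [CommRing R] {σ : R} :
    IsAtom (Ideal.span {σ}) ↔ σ ≠ 0 ∧ ∀ r, r * σ ≠ 0 → r * σ ∣ σ := by
  rw [Ne, ← Ideal.span_singleton_eq_bot]
  refine ⟨fun h => ⟨h.1, fun r hr => ?_⟩, fun ⟨hσ, h⟩ => ⟨hσ, fun J hJ => ?_⟩⟩
  · have hle : Ideal.span {r * σ} ≤ Ideal.span {σ} :=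
      Ideal.span_singleton_le_span_singleton.2 (dvd_mul_left σ r)
    rcases h.le_iff.1 hle with hbot | htop
    · exact absurd (Ideal.span_singleton_eq_bot.1 hbot) hr
    · exact Ideal.span_singleton_le_span_singleton.1 htop.ge
  · by_contra hJ0
    obtain ⟨y, hyJ, hy0⟩ := Submodule.exists_mem_ne_zero_of_ne_bot hJ0
    obtain ⟨r, rfl⟩ := Ideal.mem_span_singleton'.1 (hJ.le hyJ)
    refine hJ.not_ge (Ideal.span_singleton_le_iff_mem _ |>.2 ?_)
    exact J.mem_of_dvd (h r hy0) hyJ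

theorem MulAction.pow_smul_eq_add_nsmul {G A : Type*} [Monoid G] [AddCommMonoid A]
    [DistribMulAction G A] {g : G} {x v : A} (hx : g • x = x + v) (hv : g • v = v) (m : ℕ) :
    g ^ m • x = x + m • v := by
  induction m with
  | zero => simp
  | succ m ih =>
    rw [pow_succ', mul_smul, ih, smul_add, hx, smul_comm g m v, hv, succ_nsmul, add_assoc,
      add_comm v]

theorem exists_natCast_mul_eq_ite {R ι : Type*} [CommRing R] [Fintype ι] [DecidableEq ι]
    {p : ι → ℕ} (hp : ∀ i, (p i).Prime) (hinj : Function.Injective p) (i : ι) :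
    ∃ m : ℕ, ∀ j (y : R), (p j : R) * y = 0 → (m : R) * y = if j = i then y else 0 := by
  set N := ∏ j ∈ univ.erase i, p j
  have hcop : N.Coprime (p i) := Nat.Coprime.prod_left fun j hj =>
    (Nat.coprime_primes (hp j) (hp i)).2 (hinj.ne (ne_of_mem_erase hj))
  obtain ⟨M, -, hM⟩ := Nat.exists_mul_mod_eq_one_of_coprime hcop (hp i).one_lt
  refine ⟨N * M, fun j y hy => ?_⟩
  split_ifs with hji
  · subst hji
    rw [← Nat.div_add_mod (N * M) (p j), hM]
    push_cast
    linear_combination ((N * M / p j : ℕ) : R) * hy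
  · obtain ⟨q, hq⟩ := (dvd_prod_of_mem p (mem_erase.2 ⟨hji, mem_univ j⟩)).mul_right M
    rw [hq]
    push_cast
    linear_combination (q : R) * hy

section PureOrbit

variable {R : Type*} [CommRing R] (L : Subgroup Rˣ)

theorem exists_mem_add_notMem_orbit {x : R} (hpure : IsPureSet (orbit L x)) {I : Ideal R}
    (hI : I ≠ ⊥) : ∃ a ∈ I, x + a ∉ orbit L x := by
  by_contra! h
  refine hI (hpure I (Set.Subset.antisymm ?_ fun z hz => ⟨z, hz, 0, I.zero_mem, add_zero z⟩))
  rintro _ ⟨_, ⟨l, rfl⟩, a, ha, rfl⟩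
  show l • x + a ∈ orbit L x
  rw [← smul_inv_smul l a, ← smul_add]
  exact mem_orbit_of_mem_orbit l (h _ (I.mul_mem_left _ ha))

theorem exists_ne_sub_one_mul {σ y k : R} (hσ : IsAtom (Ideal.span {σ}))
    (hk : (k - 1) * σ ≠ 0) (hky : (k - 1) * y ∈ Ideal.span {σ}) :
    ∃ a ∈ Ideal.span {σ}, ∀ l : Rˣ, ((l : R) - 1) * y ≠ a := by
  obtain ⟨hσ0, hdvd⟩ := Ideal.isAtom_span_singleton_iff.1 hσ
  obtain ⟨r, hr⟩ := hdvd _ hk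
  -- `r * (k - 1)` acts as the identity on `σR`, which makes `l ↦ (l - 1) * y` a coboundary there.
  set c := r * ((k - 1) * y)
  have hc : c ∈ Ideal.span {σ} := Ideal.mul_mem_left _ r hky
  have hcob : ∀ l : R, (l - 1) * y ∈ Ideal.span {σ} → (l - 1) * y = (l - 1) * c := by
    intro l hl
    obtain ⟨b, hb⟩ := Ideal.mem_span_singleton'.1 hl
    rw [← hb]
    linear_combination b * hr + (k - 1) * r * hb
  by_cases hc0 : c = 0
  · refine ⟨σ, Ideal.mem_span_singleton_self σ, fun l hl => hσ0 ?_⟩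
    rw [← hl, hcob l (hl ▸ Ideal.mem_span_singleton_self σ), hc0, mul_zero]
  · refine ⟨-c, neg_mem hc, fun l hl => hc0 ?_⟩
    rw [hcob l (hl ▸ neg_mem hc)] at hl
    exact (Units.mul_right_eq_zero l).1 (by linear_combination hl)

theorem exists_shift_of_isPureSet {x : R} (hpure : IsPureSet (orbit L x)) {σ : R}
    (hσ : IsAtom (Ideal.span {σ})) (y : R) :
    ∃ a ∈ Ideal.span {σ}, (∀ l ∈ L, ((l : R) - 1) * y ≠ a) ∨
      (x + a ∉ orbit L x ∧
        ∀ l ∈ L, ((l : R) - 1) * y ∈ Ideal.span {σ} → ((l : R) - 1) * σ = 0) := by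
  by_cases hfix : ∀ l ∈ L, ((l : R) - 1) * y ∈ Ideal.span {σ} → ((l : R) - 1) * σ = 0
  · obtain ⟨a, ha, hax⟩ := exists_mem_add_notMem_orbit L hpure hσ.1
    exact ⟨a, ha, Or.inr ⟨hax, hfix⟩⟩
  · push Not at hfix
    obtain ⟨k, -, hky, hk⟩ := hfix
    obtain ⟨a, ha, hne⟩ := exists_ne_sub_one_mul hσ hk hky
    exact ⟨a, ha, Or.inl fun l _ => hne l⟩

theorem exists_sum_notMem_orbit_of_isPureSet {x : R} (hpure : IsPureSet (orbit L x))
    {ι : Type*} [Fintype ι] [DecidableEq ι] {σ : ι → R} {p : ι → ℕ} (hp : ∀ i, (p i).Prime)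
    (hinj : Function.Injective p) (hσ : ∀ i, IsAtom (Ideal.span {σ i}))
    (hpσ : ∀ i, (p i : R) * σ i = 0) :
    ∃ a : ι → R, (∀ i, a i ∈ Ideal.span {σ i}) ∧
      ∀ B : Finset ι, B.Nonempty → x + ∑ i ∈ B, a i ∉ orbit L x := by
  -- `m i` projects onto the `p i`-torsion, so `(l - 1) * (m i * x)` is the `i`-th component of
  -- `l * x - x` whenever the latter lies in `∑ᵢ σᵢR`.
  choose m hm using exists_natCast_mul_eq_ite (R := R) hp hinj
  choose a ha halt using fun i => exists_shift_of_isPureSet L hpure (hσ i) (m i * x)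
  refine ⟨a, ha, ?_⟩
  rintro B ⟨i₀, hi₀⟩ ⟨⟨l, hlL⟩, hl⟩
  have hlx : (l : R) * x = x + ∑ i ∈ B, a i := hl
  have hpa : ∀ j, (p j : R) * a j = 0 := fun j => by
    obtain ⟨b, hb⟩ := Ideal.mem_span_singleton'.1 (ha j)
    rw [← hb, mul_left_comm, hpσ, mul_zero]
  have hproj : ∀ i ∈ B, ((l : R) - 1) * (m i * x) = a i := fun i hi => by
    rw [mul_left_comm, sub_one_mul, hlx, add_sub_cancel_left, mul_sum,
      sum_congr rfl fun j _ => hm i j (a j) (hpa j), sum_ite_eq', if_pos hi]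
  have hfixed : ∀ i ∈ B, x + a i ∉ orbit L x ∧ ((l : R) - 1) * σ i = 0 := fun i hi => by
    rcases halt i with hne | ⟨hax, hfix⟩
    · exact absurd (hproj i hi) (hne l hlL)
    · exact ⟨hax, hfix l hlL (hproj i hi ▸ ha i)⟩
  have hv : (⟨l, hlL⟩ : L) • ∑ i ∈ B, a i = ∑ i ∈ B, a i :=
    smul_sum.trans <| sum_congr rfl fun i hi => by
      obtain ⟨b, hb⟩ := Ideal.mem_span_singleton'.1 (ha i)
      change (l : R) * a i = a i
      linear_combination b * (hfixed i hi).2 - ((l : R) - 1) * hb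
  -- `l` fixes `l * x - x`, so `l ^ k * x = x + k • (l * x - x)`; `k = m i₀` isolates `a i₀`.
  refine (hfixed i₀ hi₀).1 ⟨⟨l, hlL⟩ ^ m i₀, ?_⟩
  show (⟨l, hlL⟩ ^ m i₀ : L) • x = x + a i₀
  rw [pow_smul_eq_add_nsmul hl hv, nsmul_eq_mul, mul_sum,
    sum_congr rfl fun j _ => hm i₀ j (a j) (hpa j), sum_ite_eq', if_pos hi₀]

end PureOrbit

theorem IsGaloisRing.exists_socle_element {A : Type*} [CommRing A] [Finite A]
    (hA : IsGaloisRing A) :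
    ∃ (p : ℕ) (s : A), p.Prime ∧ p ∣ ringChar A ∧ s ≠ 0 ∧ (p : A) * s = 0 ∧
      ∀ w, ¬IsUnit w → w * s = 0 := by
  obtain ⟨p, hp, hloc, hnil⟩ := hA
  have hpnil : IsNilpotent (p : A) := mem_nilradical.1 (hnil ▸ Ideal.mem_span_singleton_self _)
  set e := nilpotencyClass (p : A)
  have he : 0 < e := pos_nilpotencyClass_iff.2 hpnil
  have hpe : (p : A) * (p : A) ^ (e - 1) = 0 := by
    rw [← pow_succ', Nat.sub_add_cancel he, pow_nilpotencyClass hpnil]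
  refine ⟨p, (p : A) ^ (e - 1), hp, ?_, pow_pred_nilpotencyClass hpnil, hpe, fun w hw => ?_⟩
  · have hdvd : ringChar A ∣ p ^ e :=
      ringChar.dvd (by rw [Nat.cast_pow, pow_nilpotencyClass hpnil])
    obtain ⟨k, -, hk⟩ := (Nat.dvd_prime_pow hp).1 hdvd
    have hk0 : k ≠ 0 := by
      rintro rfl
      exact CharP.ringChar_ne_one (pow_zero p ▸ hk)
    exact hk ▸ dvd_pow_self p hk0
  · have hwnil : w ∈ nilradical A := Ring.KrullDimLE.isNilpotent_iff_mem_nonunits.2 hw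
    obtain ⟨c, rfl⟩ := Ideal.mem_span_singleton'.1 (hnil ▸ hwnil)
    rw [mul_assoc, hpe, mul_zero]

theorem IsCGRing.exists_socle_family {R : Type*} [CommRing R] (hR : IsCGRing R) :
    ∃ (n : ℕ) (σ : Fin n → R) (p : Fin n → ℕ), (∀ i, (p i).Prime) ∧ Function.Injective p ∧
      (∀ i, IsAtom (Ideal.span {σ i})) ∧ (∀ i, (p i : R) * σ i = 0) ∧
      ∀ w : R, ¬IsUnit w → ∃ i, w * σ i = 0 := by
  obtain ⟨n, A, _, _, hGal, hcop, ⟨β⟩⟩ := hR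
  choose p s hp hpc hs0 hps hkill using fun i => (hGal i).exists_socle_element
  set σ : Fin n → R := fun i => β.symm (Pi.single i (s i))
  have hmul : ∀ r i, r * σ i = β.symm (Pi.single i (β r i * s i)) := fun r i => by
    rw [Pi.single_mul_right, map_mul, RingEquiv.symm_apply_apply]
  have hunit_or : ∀ r i, IsUnit (β r i) ∨ r * σ i = 0 := fun r i =>
    (em _).imp_right fun hr => by rw [hmul, hkill i _ hr, Pi.single_zero, map_zero]
  refine ⟨n, σ, p, hp, fun i j hij => ?_, fun i => ?_, fun i => ?_, fun w hw => ?_⟩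
  · by_contra hne
    exact (hp i).ne_one (Nat.eq_one_of_dvd_coprimes (hcop i j hne) (hpc i) (hij ▸ hpc j))
  · refine Ideal.isAtom_span_singleton_iff.2 ⟨by simpa [σ] using hs0 i, fun r hr => ?_⟩
    obtain ⟨u, hu⟩ := (hunit_or r i).resolve_right hr
    refine ⟨β.symm (Pi.single i ↑u⁻¹), ?_⟩
    rw [hmul, ← map_mul, ← Pi.single_mul, ← hu, mul_right_comm, Units.mul_inv, one_mul]
  · rw [hmul, map_natCast, Pi.natCast_apply, hps, Pi.single_zero, map_zero]
  · have : ¬∀ i, IsUnit (β w i) := by rwa [← Pi.isUnit_iff, isUnit_map_iff]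
    obtain ⟨i, hi⟩ := not_forall.1 this
    exact ⟨i, (hunit_or w i).resolve_left hi⟩

theorem Set.sum_indicator_one_mul {α M : Type*} [Fintype α] [CommSemiring M] (S : Set α)
    (g : α → M) : ∑ y, S.indicator 1 y * g y = ∑ᶠ s ∈ S, g s := by
  rw [finsum_mem_def, finsum_eq_sum_of_fintype]
  exact sum_congr rfl fun y _ => by by_cases h : y ∈ S <;> simp [h]

theorem separation_by_unit_character_general {R : Type*} [CommRing R] [Fintype R]
    (hCG : IsCGRing R) (L : Subgroup Rˣ)
    (χ₀ : AddChar R ℂ) (hχ₀ : Function.Bijective (fun r : R => χ₀.mulShift r))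
    (T : Set R) (t : R) (hT : T = {y : R | ∃ l ∈ L, ((l : Rˣ) : R) * t = y})
    (hTpure : IsPureSet T)
    (S S' : Set R) (hS : S ⊆ T) (hS' : S' ⊆ T) (hne : S ≠ S') :
    ∃ u : Rˣ, (∑ᶠ s ∈ S, χ₀ ((u : R) * s)) ≠ ∑ᶠ s ∈ S', χ₀ ((u : R) * s) := by
  classical
  by_contra! hsame
  obtain ⟨n, σ, p, hp, hpinj, hσ, hpσ, hkill⟩ := hCG.exists_socle_family
  set f : R → ℂ := S.indicator 1 - S'.indicator 1
  have hf : ∀ u : Rˣ, χ₀.transform f u = 0 := fun u => by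
    simp only [AddChar.transform, f, Pi.sub_apply, sub_mul, sum_sub_distrib,
      Set.sum_indicator_one_mul, hsame u, sub_self]
  have hsupp : ∀ y ∉ T, f y = 0 := fun y hy => by
    simp [f, Set.indicator_of_notMem (fun h => hy (hS h)),
      Set.indicator_of_notMem (fun h => hy (hS' h))]
  have hTt : T = orbit L t := by
    ext y
    simp [hT, mem_orbit_iff, Units.smul_def]
  refine hne (Set.indicator_one_inj ℂ (sub_eq_zero.1 (funext fun x => ?_)))
  by_cases hx : x ∈ T
  · rw [hTt, ← orbit_eq_iff.2 (hTt ▸ hx)] at hTpure hsupp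
    obtain ⟨a, ha, hout⟩ := exists_sum_notMem_orbit_of_isPureSet L hTpure hp hpinj hσ hpσ
    refine AddChar.apply_eq_zero_of_forall_add_sum_eq_zero
      (AddChar.isPrimitive_of_injective_mulShift_s16 hχ₀.1) hf (fun w hw => ?_)
      fun B hB => hsupp _ (hout B hB)
    obtain ⟨i, hi⟩ := hkill w hw
    obtain ⟨b, hb⟩ := Ideal.mem_span_singleton'.1 (ha i)
    exact ⟨i, by rw [← hb, mul_left_comm, hi, mul_zero]⟩
  · exact hsupp x hx

/-- Separation theorem, part 1: if `S ≠ S'` are subsets of a pure orbit `T` of a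
subgroup `L ≤ R^×` on a CG-ring `R`, `S` nonempty, then some unit character
`x ↦ χ₀(ux)` separates `S` from `S'`. -/
theorem separation_by_unit_character {R : Type*} [CommRing R] [Fintype R]
    (hCG : IsCGRing R) (L : Subgroup Rˣ)
    (χ₀ : AddChar R ℂ) (hχ₀ : Function.Bijective (fun r : R => χ₀.mulShift r))
    (T : Set R) (t : R) (hT : T = {y : R | ∃ l ∈ L, ((l : Rˣ) : R) * t = y})
    (hTpure : IsPureSet T)
    (S S' : Set R) (hS : S ⊆ T) (hS' : S' ⊆ T) (hne : S ≠ S') (hSne : S.Nonempty) :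
    ∃ u : Rˣ, (∑ᶠ s ∈ S, χ₀ ((u : R) * s)) ≠ ∑ᶠ s ∈ S', χ₀ ((u : R) * s) :=
  separation_by_unit_character_general hCG L χ₀ hχ₀ T t hT hTpure S S' hS hS' hne
end
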